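/- arXiv:2011.02685 — 8 statements merged into one kernel-verified Lean document; each statement's English description precedes it below -/
import Mathlib

section
/- The bivariate alternating descent polynomials Â_n(t,q) = Σ_{π ∈ S_n} t^{altdes(π)} q^{altmaj(π)} satisfy the quadratic recursion 2Â_{n+1}(t,q) = (1+tq)Â_n(tq,q) + (1+tq^n)Â_n(t,q) + Σ_{i=1}^{n-1} (1+t²q^{2i+1}) C(n,i) Â_i(t,q) Â_{n-i}(tq^{i+1},q) for all n ≥ 1, with Â_1(t,q) = 1. -/
open Finset Polynomial

/-- the entry following position `i` (0-based), well-defined when `i+1 < n` -/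
def finSucc {n : ℕ} (i : Fin n) : Fin n := ⟨((i : ℕ) + 1) % n, Nat.mod_lt _ i.pos⟩

def altDesAt {n : ℕ} (π : Equiv.Perm (Fin n)) (i : Fin n) : Prop :=
  (i : ℕ) + 1 < n ∧
    (if ((i : ℕ) + 1) % 2 = 0 then π i < π (finSucc i) else π (finSucc i) < π i)

instance {n : ℕ} (π : Equiv.Perm (Fin n)) (i : Fin n) : Decidable (altDesAt π i) := by
  unfold altDesAt; infer_instance

/-- number of alternating descents -/
def altdes {n : ℕ} (π : Equiv.Perm (Fin n)) : ℕ :=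
  (Finset.univ.filter (fun i => altDesAt π i)).card

/-- alternating major index -/
def altmaj {n : ℕ} (π : Equiv.Perm (Fin n)) : ℕ :=
  ∑ i ∈ Finset.univ.filter (fun i => altDesAt π i), ((i : ℕ) + 1)

/-- the bivariate alternating descent polynomial `Â_n(t,q)`, as a function on `ℚ × ℚ` -/
def Atq (n : ℕ) (t q : ℚ) : ℚ :=
  ∑ π : Equiv.Perm (Fin n), t ^ altdes π * q ^ altmaj π

/- ============ auxiliary development ============ -/

lemma finSucc_eq {n : ℕ} (j : Fin n) (h : (j : ℕ) + 1 < n) : finSucc j = ⟨(j : ℕ) + 1, h⟩ := by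
  simp [finSucc, Nat.mod_eq_of_lt h]

/-- generalized alternating-descent condition, with parity offset `ε` -/
def gAt (ε : ℕ) {n : ℕ} (π : Equiv.Perm (Fin n)) (i : Fin n) : Prop :=
  (i : ℕ) + 1 < n ∧
    (if ((i : ℕ) + 1 + ε) % 2 = 0 then π i < π (finSucc i) else π (finSucc i) < π i)

instance (ε : ℕ) {n : ℕ} (π : Equiv.Perm (Fin n)) (i : Fin n) : Decidable (gAt ε π i) := by
  unfold gAt; infer_instance

/-- the set of generalized alternating descents -/
def gD (ε : ℕ) {n : ℕ} (π : Equiv.Perm (Fin n)) : Finset (Fin n) :=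
  Finset.univ.filter (fun i => gAt ε π i)

/-- the generalized polynomial as a sum of products -/
def Btq (ε n : ℕ) (t q : ℚ) : ℚ :=
  ∑ π : Equiv.Perm (Fin n), ∏ j ∈ gD ε π, (t * q ^ ((j : ℕ) + 1))

lemma Atq_eq_Btq (n : ℕ) (t q : ℚ) : Atq n t q = Btq 0 n t q := by
  unfold Atq Btq altdes altmaj
  refine Finset.sum_congr rfl fun π _ => ?_
  have hD : Finset.univ.filter (fun i => altDesAt π i) = gD 0 π := by
    simp [gD, altDesAt, gAt]
  rw [hD, Finset.prod_mul_distrib, Finset.prod_const, Finset.prod_pow_eq_pow_sum]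

lemma gD_rev (ε : ℕ) {n : ℕ} (π : Equiv.Perm (Fin n)) :
    gD ε (Fin.revPerm * π) = gD (ε + 1) π := by
  ext j
  simp only [gD, Finset.mem_filter, Finset.mem_univ, true_and]
  unfold gAt
  refine and_congr_right fun _ => ?_
  simp only [Equiv.Perm.mul_apply, Fin.revPerm_apply]
  by_cases h : ((j : ℕ) + 1 + ε) % 2 = 0
  · have h' : ¬ ((j : ℕ) + 1 + (ε + 1)) % 2 = 0 := by omega
    rw [if_pos h, if_neg h', Fin.rev_lt_rev]
  · have h' : ((j : ℕ) + 1 + (ε + 1)) % 2 = 0 := by omega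
    rw [if_neg h, if_pos h', Fin.rev_lt_rev]

lemma Btq_succ (ε n : ℕ) (t q : ℚ) : Btq (ε + 1) n t q = Btq ε n t q := by
  unfold Btq
  exact Fintype.sum_equiv (Equiv.mulLeft Fin.revPerm) _ _
    (fun π => by rw [Equiv.coe_mulLeft, gD_rev])

lemma Btq_eq_Atq (ε n : ℕ) (t q : ℚ) : Btq ε n t q = Atq n t q := by
  induction ε with
  | zero => rw [Atq_eq_Btq]
  | succ e ih => rw [Btq_succ, ih]

lemma Btq_zero (ε : ℕ) (t q : ℚ) : Btq ε 0 t q = 1 := by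
  have h : ∀ π : Equiv.Perm (Fin 0), ∏ j ∈ gD ε π, (t * q ^ ((j : ℕ) + 1)) = 1 := by
    intro π
    have : gD ε π = ∅ := by
      apply Finset.eq_empty_of_forall_notMem; intro j; exact absurd j.pos (by omega)
    simp [this]
  unfold Btq
  rw [Finset.sum_congr rfl (fun π _ => h π), Finset.sum_const]
  simp

lemma Atq_one (t q : ℚ) : Atq 1 t q = 1 := by
  unfold Atq altdes altmaj
  have h : ∀ π : Equiv.Perm (Fin 1), Finset.univ.filter (fun i => altDesAt π i) = ∅ := by
    intro π
    apply Finset.eq_empty_of_forall_notMem; intro j hj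
    rw [Finset.mem_filter] at hj
    have := hj.2.1; omega
  have h2 : ∀ π : Equiv.Perm (Fin 1),
      t ^ (Finset.univ.filter (fun i => altDesAt π i)).card *
        q ^ (∑ i ∈ Finset.univ.filter (fun i => altDesAt π i), ((i : ℕ) + 1)) = 1 := by
    intro π; rw [h π]; simp
  rw [Finset.sum_congr rfl (fun π _ => h2 π), Finset.sum_const]
  simp

/- ============ the splitting construction ============ -/

section Mk

variable {n : ℕ}

/-- build a permutation of `Fin (n+1)` with the maximum at position `i`, whose first `i`
values form the set `S` in pattern `α` and whose last `n-i` values form `Sᶜ` in pattern `β` -/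
def mkFun (i : ℕ) (S : Finset (Fin n)) (hS : S.card = i) (hSc : Sᶜ.card = n - i)
    (α : Equiv.Perm (Fin i)) (β : Equiv.Perm (Fin (n - i))) : Fin (n + 1) → Fin (n + 1) :=
  fun p =>
    if h1 : (p : ℕ) < i then
      Fin.castSucc ((S.orderIsoOfFin hS (α ⟨p, h1⟩)) : Fin n)
    else if h2 : (p : ℕ) = i then Fin.last n
    else
      Fin.castSucc ((Sᶜ.orderIsoOfFin hSc (β ⟨(p : ℕ) - (i + 1),
        by have := p.isLt; omega⟩)) : Fin n)

lemma mkFun_inj (i : ℕ) (S : Finset (Fin n)) (hS : S.card = i) (hSc : Sᶜ.card = n - i)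
    (α : Equiv.Perm (Fin i)) (β : Equiv.Perm (Fin (n - i))) :
    Function.Injective (mkFun i S hS hSc α β) := by
  intro p p' h
  unfold mkFun at h
  have hlast : ∀ a : Fin n, Fin.castSucc a ≠ Fin.last n := fun a => (Fin.castSucc_lt_last a).ne
  have hmemS : ∀ x, ((S.orderIsoOfFin hS x : Fin n)) ∈ S := fun x => (S.orderIsoOfFin hS x).2
  have hmemSc : ∀ x, ((Sᶜ.orderIsoOfFin hSc x : Fin n)) ∈ Sᶜ := fun x => (Sᶜ.orderIsoOfFin hSc x).2
  split_ifs at h with h1 h2 h3 h4 h5 h6 h7 h8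
  · -- αα
    have h3 := (S.orderIsoOfFin hS).injective (Subtype.ext (Fin.castSucc_injective _ h))
    have h4 := α.injective h3
    have h5 : (p : ℕ) = (p' : ℕ) := by simpa [Fin.mk.injEq] using h4
    exact Fin.ext h5
  · exact absurd h (hlast _)
  · -- αβ
    have heq := Fin.castSucc_injective _ h
    have hmem := hmemS (α ⟨p, h1⟩)
    rw [heq] at hmem
    exact absurd hmem (Finset.mem_compl.mp (hmemSc _))
  · exact absurd h.symm (hlast _)
  · exact Fin.ext (by omega)
  · exact absurd h.symm (hlast _)
  · -- βα
    have heq := Fin.castSucc_injective _ h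
    have hmem := hmemS (α ⟨p', by assumption⟩)
    rw [← heq] at hmem
    exact absurd hmem (Finset.mem_compl.mp (hmemSc _))
  · exact absurd h (hlast _)
  · -- ββ
    have h3 := (Sᶜ.orderIsoOfFin hSc).injective (Subtype.ext (Fin.castSucc_injective _ h))
    have h4 := β.injective h3
    have h5 : (p : ℕ) - (i+1) = (p' : ℕ) - (i+1) := by simpa [Fin.mk.injEq] using h4
    exact Fin.ext (by omega)

noncomputable def mkPerm (i : ℕ) (S : Finset (Fin n)) (hS : S.card = i) (hSc : Sᶜ.card = n - i)
    (α : Equiv.Perm (Fin i)) (β : Equiv.Perm (Fin (n - i))) : Equiv.Perm (Fin (n + 1)) :=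
  Equiv.ofBijective _ (Finite.injective_iff_bijective.mp (mkFun_inj i S hS hSc α β))

lemma mkPerm_apply (i : ℕ) (S : Finset (Fin n)) (hS : S.card = i) (hSc : Sᶜ.card = n - i)
    (α : Equiv.Perm (Fin i)) (β : Equiv.Perm (Fin (n - i))) (p : Fin (n + 1)) :
    mkPerm i S hS hSc α β p = mkFun i S hS hSc α β p := rfl

end Mk

section Stat

variable {n : ℕ} (i : ℕ) (S : Finset (Fin n)) (hS : S.card = i) (hSc : Sᶜ.card = n - i)
  (α : Equiv.Perm (Fin i)) (β : Equiv.Perm (Fin (n - i)))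

lemma mk_lt (p : Fin (n + 1)) (h : (p : ℕ) < i) :
    mkPerm i S hS hSc α β p = Fin.castSucc ((S.orderIsoOfFin hS (α ⟨p, h⟩)) : Fin n) := by
  rw [mkPerm_apply]; unfold mkFun; rw [dif_pos h]

lemma mk_eq (p : Fin (n + 1)) (h : (p : ℕ) = i) :
    mkPerm i S hS hSc α β p = Fin.last n := by
  rw [mkPerm_apply]; unfold mkFun; rw [dif_neg (by omega), dif_pos h]

lemma mk_gt (p : Fin (n + 1)) (h : i < (p : ℕ)) (hb : (p : ℕ) - (i + 1) < n - i) :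
    mkPerm i S hS hSc α β p
      = Fin.castSucc ((Sᶜ.orderIsoOfFin hSc (β ⟨(p : ℕ) - (i + 1), hb⟩)) : Fin n) := by
  rw [mkPerm_apply]; unfold mkFun; rw [dif_neg (by omega), dif_neg (by omega)]

lemma cs_lt_cs (e : Fin i ≃o {x : Fin n // x ∈ S}) (x y : Fin i) :
    (Fin.castSucc (e x : Fin n) < Fin.castSucc (e y : Fin n)) ↔ x < y := by
  rw [Fin.castSucc_lt_castSucc_iff]
  exact (Subtype.coe_lt_coe).trans e.lt_iff_lt

lemma cs_lt_cs' (e : Fin (n - i) ≃o {x : Fin n // x ∈ Sᶜ}) (x y : Fin (n - i)) :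
    (Fin.castSucc (e x : Fin n) < Fin.castSucc (e y : Fin n)) ↔ x < y := by
  rw [Fin.castSucc_lt_castSucc_iff]
  exact (Subtype.coe_lt_coe).trans e.lt_iff_lt

lemma gAt_mk_low (ε m : ℕ) (hin : i ≤ n) (hm : m + 1 < i) :
    gAt ε (mkPerm i S hS hSc α β) ⟨m, by omega⟩ ↔ gAt ε α ⟨m, by omega⟩ := by
  have h1 : m < n + 1 := by omega
  have h2 : m + 1 < n + 1 := by omega
  have h2i : m + 1 < i := hm
  unfold gAt
  rw [finSucc_eq (⟨m, by omega⟩ : Fin (n + 1)) (by exact h2),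
      finSucc_eq (⟨m, by omega⟩ : Fin i) (by exact h2i)]
  rw [mk_lt i S hS hSc α β ⟨m, by omega⟩ (by exact Nat.lt_of_succ_lt hm),
      mk_lt i S hS hSc α β ⟨(⟨m, by omega⟩ : Fin (n+1)).val + 1, h2⟩ (by exact hm)]
  rw [cs_lt_cs i S (S.orderIsoOfFin hS), cs_lt_cs i S (S.orderIsoOfFin hS)]
  constructor <;> rintro ⟨-, hh⟩
  · exact ⟨by exact hm, by split_ifs at hh ⊢ <;> exact hh⟩
  · exact ⟨by exact h2, by split_ifs at hh ⊢ <;> exact hh⟩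
lemma gAt_mk_left (ε : ℕ) (hin : i ≤ n) (hpos : 0 < i) :
    gAt ε (mkPerm i S hS hSc α β) ⟨i - 1, by omega⟩ ↔ (i + ε) % 2 = 0 := by
  have h2 : i - 1 + 1 < n + 1 := by omega
  unfold gAt
  rw [finSucc_eq (⟨i - 1, by omega⟩ : Fin (n + 1)) (by exact h2)]
  rw [mk_lt i S hS hSc α β ⟨i - 1, by omega⟩ (by exact (by omega : i - 1 < i))]
  rw [mk_eq i S hS hSc α β ⟨i - 1 + 1, h2⟩ (by exact (by omega : i - 1 + 1 = i))]
  simp only [Fin.val_mk]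
  by_cases hpar : (i - 1 + 1 + ε) % 2 = 0
  · rw [if_pos hpar]
    simp only [Fin.castSucc_lt_last]
    constructor
    · intro; omega
    · intro; exact ⟨by omega, trivial⟩
  · rw [if_neg hpar]
    have hlt : ¬ (Fin.last n < Fin.castSucc ((S.orderIsoOfFin hS (α ⟨i - 1, by omega⟩)) : Fin n)) :=
      not_lt_of_gt (Fin.castSucc_lt_last _)
    constructor
    · rintro ⟨-, hh⟩; exact absurd hh hlt
    · intro hc; omega

lemma gAt_mk_right (ε : ℕ) (hiln : i < n) :
    gAt ε (mkPerm i S hS hSc α β) ⟨i, by omega⟩ ↔ (i + ε) % 2 = 0 := by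
  have h2 : i + 1 < n + 1 := by omega
  unfold gAt
  rw [finSucc_eq (⟨i, by omega⟩ : Fin (n + 1)) (by exact h2)]
  rw [mk_eq i S hS hSc α β ⟨i, by omega⟩ (by exact rfl)]
  rw [mk_gt i S hS hSc α β ⟨i + 1, h2⟩ (by exact (by omega : i < i + 1))
      (by exact (by omega : i + 1 - (i + 1) < n - i))]
  simp only [Fin.val_mk]
  by_cases hpar : (i + 1 + ε) % 2 = 0
  · rw [if_pos hpar]
    have hlt : ¬ (Fin.last n < Fin.castSucc
        ((Sᶜ.orderIsoOfFin hSc (β ⟨i + 1 - (i + 1), by omega⟩)) : Fin n)) :=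
      not_lt_of_gt (Fin.castSucc_lt_last _)
    constructor
    · rintro ⟨-, hh⟩; exact absurd hh hlt
    · intro hc; omega
  · rw [if_neg hpar]
    simp only [Fin.castSucc_lt_last]
    constructor
    · intro; omega
    · intro; exact ⟨by omega, trivial⟩

lemma gAt_mk_high (ε x : ℕ) (hin : i ≤ n) (hx : x + 1 < n - i) :
    gAt ε (mkPerm i S hS hSc α β) ⟨i + 1 + x, by omega⟩ ↔ gAt (ε + i + 1) β ⟨x, by omega⟩ := by
  have h2 : i + 1 + x + 1 < n + 1 := by omega
  have h2x : x + 1 < n - i := hx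
  unfold gAt
  rw [finSucc_eq (⟨i + 1 + x, by omega⟩ : Fin (n + 1)) (by exact h2),
      finSucc_eq (⟨x, by omega⟩ : Fin (n - i)) (by exact h2x)]
  rw [mk_gt i S hS hSc α β ⟨i + 1 + x, by omega⟩ (by exact (by omega : i < i + 1 + x))
      (by exact (by omega : i + 1 + x - (i + 1) < n - i))]
  rw [mk_gt i S hS hSc α β ⟨i + 1 + x + 1, h2⟩ (by exact (by omega : i < i + 1 + x + 1))
      (by exact (by omega : i + 1 + x + 1 - (i + 1) < n - i))]
  rw [cs_lt_cs' i S (Sᶜ.orderIsoOfFin hSc), cs_lt_cs' i S (Sᶜ.orderIsoOfFin hSc)]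
  simp only [Fin.val_mk]
  have e1 : (⟨i + 1 + x - (i + 1), by omega⟩ : Fin (n - i)) = ⟨x, by omega⟩ :=
    Fin.ext (by exact (by omega : i + 1 + x - (i + 1) = x))
  have e2 : (⟨i + 1 + x + 1 - (i + 1), by omega⟩ : Fin (n - i)) = ⟨x + 1, h2x⟩ :=
    Fin.ext (by exact (by omega : i + 1 + x + 1 - (i + 1) = x + 1))
  rw [e1, e2]
  constructor <;> rintro ⟨-, hh⟩ <;> refine ⟨by omega, ?_⟩ <;>
    split_ifs at hh ⊢ <;> first | exact hh | (exfalso; omega)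

lemma W_mk (ε : ℕ) (hin : i ≤ n) (t q : ℚ) :
    ∏ j ∈ gD ε (mkPerm i S hS hSc α β), (t * q ^ ((j : ℕ) + 1)) =
      ((if i = 0 then 1 else if (i + ε) % 2 = 0 then t * q ^ i else 1) *
        (if i = n then 1 else if (i + ε) % 2 = 0 then t * q ^ (i + 1) else 1)) *
      ((∏ a ∈ gD ε α, (t * q ^ ((a : ℕ) + 1))) *
        (∏ b ∈ gD (ε + i + 1) β, (t * q ^ (i + 1) * q ^ ((b : ℕ) + 1)))) := by
  classical
  set G : ℕ → ℚ := fun m => if h : m < n + 1 then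
      (if gAt ε (mkPerm i S hS hSc α β) ⟨m, h⟩ then t * q ^ (m + 1) else 1) else 1 with hG
  set A : ℕ → ℚ := fun m => if h : m < i then
      (if gAt ε α ⟨m, h⟩ then t * q ^ (m + 1) else 1) else 1 with hA
  set B : ℕ → ℚ := fun m => if h : m < n - i then
      (if gAt (ε + i + 1) β ⟨m, h⟩ then t * q ^ (i + 1) * q ^ (m + 1) else 1) else 1 with hB
  have hstep1 : ∏ j ∈ gD ε (mkPerm i S hS hSc α β), (t * q ^ ((j : ℕ) + 1))
      = ∏ m ∈ Finset.range (n + 1), G m := by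
    rw [gD, Finset.prod_filter, ← Fin.prod_univ_eq_prod_range G (n + 1)]
    refine Finset.prod_congr rfl fun j _ => ?_
    rw [hG]
    simp only [j.isLt, dif_pos, Fin.eta]
  have hstepA : ∏ a ∈ gD ε α, (t * q ^ ((a : ℕ) + 1)) = ∏ m ∈ Finset.range i, A m := by
    rw [gD, Finset.prod_filter, ← Fin.prod_univ_eq_prod_range A i]
    refine Finset.prod_congr rfl fun a _ => ?_
    rw [hA]
    simp only [a.isLt, dif_pos, Fin.eta]
  have hstepB : ∏ b ∈ gD (ε + i + 1) β, (t * q ^ (i + 1) * q ^ ((b : ℕ) + 1))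
      = ∏ m ∈ Finset.range (n - i), B m := by
    rw [gD, Finset.prod_filter, ← Fin.prod_univ_eq_prod_range B (n - i)]
    refine Finset.prod_congr rfl fun b _ => ?_
    rw [hB]
    simp only [b.isLt, dif_pos, Fin.eta]
  have hsplit : ∏ m ∈ Finset.range (n + 1), G m =
      (∏ m ∈ Finset.range i, G m) *
        ((∏ x ∈ Finset.range (n - i), G (i + 1 + x)) * G i) := by
    rw [show n + 1 = i + ((n - i) + 1) by omega, Finset.prod_range_add,
      Finset.prod_range_succ' (fun x => G (i + x)) (n - i)]
    rw [Nat.add_zero]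
    congr 1
    congr 1
    exact Finset.prod_congr rfl fun x _ => by rw [show i + (x + 1) = i + 1 + x by omega]
  have hleft : ∏ m ∈ Finset.range i, G m
      = (if i = 0 then 1 else if (i + ε) % 2 = 0 then t * q ^ i else 1)
          * ∏ m ∈ Finset.range i, A m := by
    rcases Nat.eq_zero_or_pos i with h0 | hpos
    · subst h0; simp
    · obtain ⟨i', rfl⟩ : ∃ i', i = i' + 1 := ⟨i - 1, by omega⟩
      rw [Finset.prod_range_succ, Finset.prod_range_succ]
      have hGA : ∀ m ∈ Finset.range i', G m = A m := by
        intro m hm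
        rw [Finset.mem_range] at hm
        simp only [hG, hA]
        rw [dif_pos (show m < n + 1 by omega), dif_pos (show m < i' + 1 by omega)]
        rw [if_congr (gAt_mk_low (i' + 1) S hS hSc α β ε m hin (by omega)) rfl rfl]
      rw [Finset.prod_congr rfl hGA]
      have hAlast : A i' = 1 := by
        simp only [hA]
        rw [dif_pos (show i' < i' + 1 by omega)]
        rw [if_neg (fun hc => absurd hc.1 (show ¬ (i' + 1 < i' + 1) by omega))]
      have hGlast : G i' = (if (i' + 1 + ε) % 2 = 0 then t * q ^ (i' + 1) else 1) := by
        simp only [hG]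
        rw [dif_pos (show i' < n + 1 by omega)]
        rw [if_congr (show gAt ε (mkPerm (i' + 1) S hS hSc α β) ⟨i', by omega⟩
            ↔ (i' + 1 + ε) % 2 = 0 from
            gAt_mk_left (i' + 1) S hS hSc α β ε hin (by omega)) rfl rfl]
      rw [hAlast, hGlast, if_neg (by omega : ¬ i' + 1 = 0)]
      ring
  have hmid : G i = (if i = n then 1 else if (i + ε) % 2 = 0 then t * q ^ (i + 1) else 1) := by
    rcases eq_or_lt_of_le hin with hEq | hlt
    · subst hEq
      simp only [hG]
      rw [dif_pos (show i < i + 1 by omega)]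
      rw [if_neg (fun hc => absurd hc.1 (show ¬ (i + 1 < i + 1) by omega))]
      simp
    · simp only [hG]
      rw [dif_pos (show i < n + 1 by omega), if_neg (by omega : ¬ i = n)]
      rw [if_congr (gAt_mk_right i S hS hSc α β ε hlt) rfl rfl]
  have hright : ∀ x ∈ Finset.range (n - i), G (i + 1 + x) = B x := by
    intro x hx
    rw [Finset.mem_range] at hx
    rcases Nat.lt_or_ge (x + 1) (n - i) with hx1 | hx1
    · simp only [hG, hB]
      rw [dif_pos (show i + 1 + x < n + 1 by omega), dif_pos (show x < n - i by omega)]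
      rw [if_congr (gAt_mk_high i S hS hSc α β ε x hin hx1) rfl rfl]
      congr 1
      rw [show i + 1 + x + 1 = (i + 1) + (x + 1) by omega, pow_add]
      ring
    · have hxeq : i + 1 + x = n := by omega
      simp only [hG, hB]
      rw [dif_pos (show i + 1 + x < n + 1 by omega), dif_pos (show x < n - i by omega)]
      rw [if_neg (fun hc => absurd hc.1 (show ¬ (i + 1 + x + 1 < n + 1) by omega)),
        if_neg (fun hc => absurd hc.1 (show ¬ (x + 1 < n - i) by omega))]
  rw [hstep1, hsplit, hleft, hmid, hstepA, hstepB, Finset.prod_congr rfl hright]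
  ring

lemma mem_iff_mk (v : Fin n) :
    v ∈ S ↔ ∃ p : Fin (n + 1), ∃ hp : (p : ℕ) < i, mkPerm i S hS hSc α β p = Fin.castSucc v := by
  have hin : i ≤ n := by
    rw [← hS]; simpa using Finset.card_le_univ S
  constructor
  · intro hv
    set a := (S.orderIsoOfFin hS).symm ⟨v, hv⟩ with ha
    have hlt : ((α.symm a : Fin i) : ℕ) < i := (α.symm a).isLt
    refine ⟨⟨(α.symm a : ℕ), by omega⟩, by exact hlt, ?_⟩
    rw [mk_lt i S hS hSc α β _ (by exact hlt)]
    congr 1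
    have : α ⟨((α.symm a : Fin i) : ℕ), by exact hlt⟩ = a := by
      rw [Fin.eta]; exact α.apply_symm_apply a
    rw [this, ha, OrderIso.apply_symm_apply]
  · rintro ⟨p, hp, hmk⟩
    rw [mk_lt i S hS hSc α β p hp] at hmk
    have := Fin.castSucc_injective _ hmk
    rw [← this]
    exact ((S.orderIsoOfFin hS) (α ⟨(p : ℕ), hp⟩)).2

end Stat

/- ============ the core fiber computation ============ -/

lemma core {n : ℕ} (ε : ℕ) (t q : ℚ) (k : Fin (n + 1)) :
    ∑ π ∈ Finset.univ.filter (fun π : Equiv.Perm (Fin (n + 1)) => π k = Fin.last n),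
        ∏ j ∈ gD ε π, (t * q ^ ((j : ℕ) + 1)) =
      ((if (k : ℕ) = 0 then 1 else if ((k : ℕ) + ε) % 2 = 0 then t * q ^ (k : ℕ) else 1) *
        (if (k : ℕ) = n then 1 else if ((k : ℕ) + ε) % 2 = 0 then t * q ^ ((k : ℕ) + 1) else 1)) *
      ((n.choose (k : ℕ) : ℚ) * (Btq ε (k : ℕ) t q *
        Btq (ε + (k : ℕ) + 1) (n - (k : ℕ)) (t * q ^ ((k : ℕ) + 1)) q)) := by
  classical
  set i : ℕ := (k : ℕ) with hik
  have hin : i ≤ n := by have := k.isLt; omega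
  set W : Equiv.Perm (Fin (n + 1)) → ℚ := fun π => ∏ j ∈ gD ε π, (t * q ^ ((j : ℕ) + 1)) with hW
  set D : Finset (Finset (Fin n) × (Equiv.Perm (Fin i) × Equiv.Perm (Fin (n - i)))) :=
    (Finset.powersetCard i Finset.univ) ×ˢ (Finset.univ ×ˢ Finset.univ) with hD
  have hcc : ∀ SS : Finset (Fin n), SS.card = i → SSᶜ.card = n - i := by
    intro SS h
    rw [Finset.card_compl, h, Fintype.card_fin]
  set φ : Finset (Fin n) × (Equiv.Perm (Fin i) × Equiv.Perm (Fin (n - i))) →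
      Equiv.Perm (Fin (n + 1)) := fun x =>
    if h : x.1.card = i then mkPerm i x.1 h (hcc x.1 h) x.2.1 x.2.2 else 1 with hφ
  have key : ∑ x ∈ D, W (φ x)
      = ∑ π ∈ Finset.univ.filter (fun π : Equiv.Perm (Fin (n + 1)) => π k = Fin.last n), W π := by
    refine Finset.sum_bij (fun x _ => φ x) ?_ ?_ ?_ (fun x hx => rfl)
    · -- membership
      intro x hx
      rw [hD, Finset.mem_product] at hx
      have hcard : x.1.card = i := Finset.mem_powersetCard_univ.mp hx.1
      rw [Finset.mem_filter]
      refine ⟨Finset.mem_univ _, ?_⟩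
      rw [hφ]
      simp only []
      rw [dif_pos hcard]
      exact mk_eq i x.1 hcard (hcc x.1 hcard) x.2.1 x.2.2 k hik.symm
    · -- injectivity
      rintro ⟨S₁, α₁, β₁⟩ h₁ ⟨S₂, α₂, β₂⟩ h₂ heq
      rw [hD, Finset.mem_product] at h₁ h₂
      have hc₁ : S₁.card = i := Finset.mem_powersetCard_univ.mp h₁.1
      have hc₂ : S₂.card = i := Finset.mem_powersetCard_univ.mp h₂.1
      rw [hφ] at heq
      simp only [] at heq
      rw [dif_pos hc₁, dif_pos hc₂] at heq
      have hSS : S₁ = S₂ := by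
        ext v
        rw [mem_iff_mk i S₁ hc₁ (hcc S₁ hc₁) α₁ β₁ v,
            mem_iff_mk i S₂ hc₂ (hcc S₂ hc₂) α₂ β₂ v, heq]
      subst hSS
      have h1 : ∀ p, mkPerm i S₁ hc₁ (hcc S₁ hc₁) α₁ β₁ p
          = mkPerm i S₁ hc₂ (hcc S₁ hc₂) α₂ β₂ p := fun p => by rw [heq]
      have hα : α₁ = α₂ := by
        apply Equiv.ext
        intro a
        have ha := a.isLt
        have hp := h1 ⟨(a : ℕ), by omega⟩
        rw [mk_lt i S₁ hc₁ (hcc S₁ hc₁) α₁ β₁ _ (by exact a.isLt),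
            mk_lt i S₁ hc₂ (hcc S₁ hc₂) α₂ β₂ _ (by exact a.isLt)] at hp
        have h3 : (S₁.orderIsoOfFin hc₁) (α₁ ⟨(a : ℕ), a.isLt⟩)
            = (S₁.orderIsoOfFin hc₁) (α₂ ⟨(a : ℕ), a.isLt⟩) :=
          Subtype.ext (Fin.castSucc_injective _ hp)
        have h4 := (S₁.orderIsoOfFin hc₁).injective h3
        exact h4
      have hβ : β₁ = β₂ := by
        apply Equiv.ext
        intro b
        have hb := b.isLt
        have hp := h1 ⟨i + 1 + (b : ℕ), by omega⟩
        rw [mk_gt i S₁ hc₁ (hcc S₁ hc₁) α₁ β₁ _ (by exact (by omega : i < i + 1 + (b : ℕ)))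
              (by exact (by omega : i + 1 + (b : ℕ) - (i + 1) < n - i)),
            mk_gt i S₁ hc₂ (hcc S₁ hc₂) α₂ β₂ _ (by exact (by omega : i < i + 1 + (b : ℕ)))
              (by exact (by omega : i + 1 + (b : ℕ) - (i + 1) < n - i))] at hp
        have h3 : (S₁ᶜ.orderIsoOfFin (hcc S₁ hc₁)) (β₁ ⟨i + 1 + (b : ℕ) - (i + 1), by omega⟩)
            = (S₁ᶜ.orderIsoOfFin (hcc S₁ hc₁)) (β₂ ⟨i + 1 + (b : ℕ) - (i + 1), by omega⟩) :=
          Subtype.ext (Fin.castSucc_injective _ hp)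
        have h4 := (S₁ᶜ.orderIsoOfFin (hcc S₁ hc₁)).injective h3
        have hidx : (⟨i + 1 + (b : ℕ) - (i + 1), by omega⟩ : Fin (n - i)) = b :=
          Fin.ext (by exact (by omega : i + 1 + (b : ℕ) - (i + 1) = (b : ℕ)))
        rw [hidx] at h4
        exact h4
      rw [Prod.mk.injEq, Prod.mk.injEq]
      exact ⟨rfl, hα, hβ⟩
    · -- surjectivity
      intro π hπ
      rw [Finset.mem_filter] at hπ
      have hk : π k = Fin.last n := hπ.2
      have hne : ∀ p : Fin (n + 1), (p : ℕ) ≠ i → π p ≠ Fin.last n := by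
        intro p hp hl
        rw [← hk] at hl
        exact hp (by rw [π.injective hl])
      set u : (p : Fin (n + 1)) → (p : ℕ) ≠ i → Fin n :=
        fun p hp => (π p).castPred (hne p hp) with hu
      have hcu : ∀ p hp, Fin.castSucc (u p hp) = π p := fun p hp => Fin.castSucc_castPred _ _
      set S : Finset (Fin n) :=
        Finset.univ.filter (fun v => ((π.symm (Fin.castSucc v)) : ℕ) < i) with hSdef
      have hmemS : ∀ v : Fin n, v ∈ S ↔ ((π.symm (Fin.castSucc v)) : ℕ) < i := by
        intro v; rw [hSdef, Finset.mem_filter]; simp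
      set w : Fin i → Fin n :=
        fun a => u ⟨(a : ℕ), by have := a.isLt; omega⟩
          (by intro hh; simp only [Fin.val_mk] at hh; have := a.isLt; omega) with hw
      have hcw : ∀ a : Fin i,
          Fin.castSucc (w a) = π ⟨(a : ℕ), by have := a.isLt; omega⟩ := fun a =>
        hcu ⟨(a : ℕ), by have := a.isLt; omega⟩
          (by intro hh; simp only [Fin.val_mk] at hh; have := a.isLt; omega)
      have hsymmw : ∀ a : Fin i,
          π.symm (Fin.castSucc (w a)) = ⟨(a : ℕ), by have := a.isLt; omega⟩ := by
        intro a; rw [hcw a, Equiv.symm_apply_apply]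
      have hwS : ∀ a : Fin i, w a ∈ S := by
        intro a; rw [hmemS, hsymmw a]; exact a.isLt
      have hwinj : Function.Injective w := by
        intro a a' hww
        have h2 := congrArg (fun zz => π.symm (Fin.castSucc zz)) hww
        rw [hsymmw, hsymmw] at h2
        have h9 := congrArg Fin.val h2
        exact Fin.ext h9
      have hSimg : S = Finset.image w Finset.univ := by
        ext v
        rw [hmemS, Finset.mem_image]
        constructor
        · intro hv
          refine ⟨⟨((π.symm (Fin.castSucc v)) : ℕ), hv⟩, Finset.mem_univ _, ?_⟩
          have h6 : Fin.castSucc (w ⟨((π.symm (Fin.castSucc v)) : ℕ), hv⟩)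
              = π (π.symm (Fin.castSucc v)) := hcw _
          rw [Equiv.apply_symm_apply] at h6
          exact Fin.castSucc_injective _ h6
        · rintro ⟨a, -, rfl⟩
          rw [hsymmw a]; exact a.isLt
      have hScard : S.card = i := by
        rw [hSimg, Finset.card_image_of_injective _ hwinj, Finset.card_univ, Fintype.card_fin]
      have hbpos : ∀ b : Fin (n - i), i + 1 + (b : ℕ) < n + 1 := fun b => by
        have := b.isLt; omega
      set z : Fin (n - i) → Fin n :=
        fun b => u ⟨i + 1 + (b : ℕ), hbpos b⟩
          (by intro hh; simp only [Fin.val_mk] at hh; omega) with hz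
      have hcz : ∀ b, Fin.castSucc (z b) = π ⟨i + 1 + (b : ℕ), hbpos b⟩ := fun b =>
        hcu ⟨i + 1 + (b : ℕ), hbpos b⟩
          (by intro hh; simp only [Fin.val_mk] at hh; omega)
      have hsymmz : ∀ b, π.symm (Fin.castSucc (z b)) = ⟨i + 1 + (b : ℕ), hbpos b⟩ := by
        intro b; rw [hcz b, Equiv.symm_apply_apply]
      have hzS : ∀ b, z b ∈ Sᶜ := by
        intro b
        rw [Finset.mem_compl, hmemS, hsymmz b]
        exact (by omega : ¬ (i + 1 + (b : ℕ) < i))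
      have f1inj : Function.Injective
          (fun a : Fin i => (S.orderIsoOfFin hScard).symm ⟨w a, hwS a⟩) := by
        intro a a' h
        have h2 := congrArg (S.orderIsoOfFin hScard) h
        rw [OrderIso.apply_symm_apply, OrderIso.apply_symm_apply] at h2
        exact hwinj (congrArg Subtype.val h2)
      have f2inj : Function.Injective
          (fun b : Fin (n - i) => (Sᶜ.orderIsoOfFin (hcc S hScard)).symm
            ⟨z b, hzS b⟩) := by
        intro b b' h
        have h2 := congrArg (Sᶜ.orderIsoOfFin (hcc S hScard)) h
        rw [OrderIso.apply_symm_apply, OrderIso.apply_symm_apply] at h2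
        have hzz : z b = z b' := congrArg Subtype.val h2
        have h3 := congrArg (fun zz => π.symm (Fin.castSucc zz)) hzz
        rw [hsymmz, hsymmz] at h3
        have h4 : i + 1 + (b : ℕ) = i + 1 + (b' : ℕ) := congrArg Fin.val h3
        exact Fin.ext (by omega)
      set αp : Equiv.Perm (Fin i) :=
        Equiv.ofBijective _ (Finite.injective_iff_bijective.mp f1inj) with hαp
      set βp : Equiv.Perm (Fin (n - i)) :=
        Equiv.ofBijective _ (Finite.injective_iff_bijective.mp f2inj) with hβp
      refine ⟨(S, (αp, βp)), ?_, ?_⟩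
      · rw [hD, Finset.mem_product, Finset.mem_product]
        exact ⟨Finset.mem_powersetCard_univ.mpr hScard, Finset.mem_univ _, Finset.mem_univ _⟩
      · rw [hφ]
        simp only []
        rw [dif_pos hScard]
        apply Equiv.ext
        intro p
        rcases lt_trichotomy ((p : ℕ)) i with hp | hp | hp
        · rw [mk_lt i S hScard (hcc S hScard) αp βp p hp]
          have hval : αp ⟨(p : ℕ), hp⟩
              = (S.orderIsoOfFin hScard).symm ⟨w ⟨(p : ℕ), hp⟩, hwS _⟩ := rfl
          rw [hval, OrderIso.apply_symm_apply]
          exact hcw ⟨(p : ℕ), hp⟩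
        · rw [mk_eq i S hScard (hcc S hScard) αp βp p hp]
          rw [show p = k from Fin.ext (by rw [hp]), hk]
        · have hb : (p : ℕ) - (i + 1) < n - i := by have := p.isLt; omega
          rw [mk_gt i S hScard (hcc S hScard) αp βp p hp hb]
          have hval : βp ⟨(p : ℕ) - (i + 1), hb⟩
              = (Sᶜ.orderIsoOfFin (hcc S hScard)).symm
                  ⟨z ⟨(p : ℕ) - (i + 1), hb⟩, hzS _⟩ := rfl
          rw [hval, OrderIso.apply_symm_apply]
          have hpp : (⟨i + 1 + ((p : ℕ) - (i + 1)), hbpos ⟨(p : ℕ) - (i + 1), hb⟩⟩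
              : Fin (n + 1)) = p := Fin.ext (by have := p.isLt; exact (by omega :
                i + 1 + ((p : ℕ) - (i + 1)) = (p : ℕ)))
          conv_rhs => rw [← hpp]
          exact hcz ⟨(p : ℕ) - (i + 1), hb⟩
  have factor : ∑ x ∈ D, W (φ x) =
      ((if i = 0 then 1 else if (i + ε) % 2 = 0 then t * q ^ i else 1) *
        (if i = n then 1 else if (i + ε) % 2 = 0 then t * q ^ (i + 1) else 1)) *
      ((n.choose i : ℚ) * (Btq ε i t q * Btq (ε + i + 1) (n - i) (t * q ^ (i + 1)) q)) := by
    rw [hD, Finset.sum_product]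
    have inner : ∀ SS ∈ Finset.powersetCard i (Finset.univ : Finset (Fin n)),
        ∑ y ∈ (Finset.univ ×ˢ Finset.univ :
            Finset (Equiv.Perm (Fin i) × Equiv.Perm (Fin (n - i)))), W (φ (SS, y)) =
        ((if i = 0 then 1 else if (i + ε) % 2 = 0 then t * q ^ i else 1) *
          (if i = n then 1 else if (i + ε) % 2 = 0 then t * q ^ (i + 1) else 1)) *
        (Btq ε i t q * Btq (ε + i + 1) (n - i) (t * q ^ (i + 1)) q) := by
      intro SS hSS
      have hcard : SS.card = i := Finset.mem_powersetCard_univ.mp hSS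
      rw [Finset.sum_product]
      have term : ∀ (a : Equiv.Perm (Fin i)) (b : Equiv.Perm (Fin (n - i))),
          W (φ (SS, (a, b))) =
          ((if i = 0 then 1 else if (i + ε) % 2 = 0 then t * q ^ i else 1) *
            (if i = n then 1 else if (i + ε) % 2 = 0 then t * q ^ (i + 1) else 1)) *
          ((∏ x ∈ gD ε a, (t * q ^ ((x : ℕ) + 1))) *
            (∏ x ∈ gD (ε + i + 1) b, (t * q ^ (i + 1) * q ^ ((x : ℕ) + 1)))) := by
        intro a b
        rw [hφ]
        simp only []
        rw [dif_pos hcard, hW]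
        exact W_mk i SS hcard (hcc SS hcard) a b ε hin t q
      calc ∑ a : Equiv.Perm (Fin i), ∑ b : Equiv.Perm (Fin (n - i)), W (φ (SS, (a, b)))
          = ∑ a : Equiv.Perm (Fin i), ∑ b : Equiv.Perm (Fin (n - i)),
            ((if i = 0 then 1 else if (i + ε) % 2 = 0 then t * q ^ i else 1) *
              (if i = n then 1 else if (i + ε) % 2 = 0 then t * q ^ (i + 1) else 1)) *
            ((∏ x ∈ gD ε a, (t * q ^ ((x : ℕ) + 1))) *
              (∏ x ∈ gD (ε + i + 1) b, (t * q ^ (i + 1) * q ^ ((x : ℕ) + 1)))) := by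
            exact Finset.sum_congr rfl fun a _ => Finset.sum_congr rfl fun b _ => term a b
        _ = _ := by
            rw [Btq, Btq]
            simp_rw [← Finset.mul_sum]
            rw [← Finset.sum_mul]
    rw [Finset.sum_congr rfl inner, Finset.sum_const, Finset.card_powersetCard,
      Finset.card_univ, Fintype.card_fin, nsmul_eq_mul]
    push_cast
    ring
  exact key.symm.trans factor

/- ============ the splitting recursion ============ -/

lemma max_split (ε n : ℕ) (hn : 1 ≤ n) (t q : ℚ) :
    Btq ε (n + 1) t q =
      (if ε % 2 = 0 then t * q else 1) * Btq (ε + 1) n (t * q) q +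
      (if (n + ε) % 2 = 0 then t * q ^ n else 1) * Btq ε n t q +
      ∑ i ∈ Finset.Ioo 0 n,
        (if (i + ε) % 2 = 0 then t ^ 2 * q ^ (2 * i + 1) else 1) * (n.choose i : ℚ) *
          Btq ε i t q * Btq (ε + i + 1) (n - i) (t * q ^ (i + 1)) q := by
  classical
  set T : ℕ → ℚ := fun i =>
    ((if i = 0 then 1 else if (i + ε) % 2 = 0 then t * q ^ i else 1) *
      (if i = n then 1 else if (i + ε) % 2 = 0 then t * q ^ (i + 1) else 1)) *
    ((n.choose i : ℚ) * (Btq ε i t q *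
      Btq (ε + i + 1) (n - i) (t * q ^ (i + 1)) q)) with hT
  have hfib : Btq ε (n + 1) t q = ∑ k : Fin (n + 1), T (k : ℕ) := by
    rw [Btq, ← Finset.sum_fiberwise Finset.univ
      (fun π : Equiv.Perm (Fin (n + 1)) => π.symm (Fin.last n))
      (fun π => ∏ j ∈ gD ε π, (t * q ^ ((j : ℕ) + 1)))]
    refine Finset.sum_congr rfl fun k _ => ?_
    have hfil : Finset.univ.filter
        (fun π : Equiv.Perm (Fin (n + 1)) => π.symm (Fin.last n) = k) =
        Finset.univ.filter (fun π : Equiv.Perm (Fin (n + 1)) => π k = Fin.last n) := by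
      apply Finset.filter_congr
      intro π _
      rw [Equiv.symm_apply_eq]
      simp [eq_comm]
    rw [hfil, core ε t q k, hT]
  rw [hfib, Fin.sum_univ_eq_sum_range T (n + 1), Finset.sum_range_succ]
  have hrange : Finset.range n = insert 0 (Finset.Ioo 0 n) := by
    ext m
    simp only [Finset.mem_range, Finset.mem_insert, Finset.mem_Ioo]
    omega
  rw [hrange, Finset.sum_insert (by simp)]
  have hT0 : T 0 = (if ε % 2 = 0 then t * q else 1) * Btq (ε + 1) n (t * q) q := by
    rw [hT]
    simp only [eq_self_iff_true, if_true, if_neg (by omega : ¬ (0 : ℕ) = n),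
      Nat.choose_zero_right, Nat.cast_one, Btq_zero, Nat.zero_add, Nat.add_zero,
      Nat.sub_zero, pow_one, one_mul, mul_one]
  have hTn : T n = (if (n + ε) % 2 = 0 then t * q ^ n else 1) * Btq ε n t q := by
    rw [hT]
    simp only [eq_self_iff_true, if_true, if_neg (by omega : ¬ n = 0), Nat.choose_self,
      Nat.cast_one, Nat.sub_self, Btq_zero, one_mul, mul_one]
  have hTm : ∀ m ∈ Finset.Ioo 0 n, T m =
      (if (m + ε) % 2 = 0 then t ^ 2 * q ^ (2 * m + 1) else 1) * (n.choose m : ℚ) *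
        Btq ε m t q * Btq (ε + m + 1) (n - m) (t * q ^ (m + 1)) q := by
    intro m hm
    rw [Finset.mem_Ioo] at hm
    rw [hT]
    simp only [if_neg (by omega : ¬ m = 0), if_neg (by omega : ¬ m = n)]
    by_cases hpar : (m + ε) % 2 = 0
    · rw [if_pos hpar, if_pos hpar, if_pos hpar,
        show 2 * m + 1 = m + (m + 1) by omega, pow_add]
      ring
    · rw [if_neg hpar, if_neg hpar, if_neg hpar]
      ring
  rw [Finset.sum_congr rfl hTm, hT0, hTn]
  ring

/- ============ main theorem ============ -/

/-- the quadratic recursion for `Â_n(t,q)`. -/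
theorem stmt5 (n : ℕ) (hn : 1 ≤ n) (t q : ℚ) :
    Atq 1 t q = 1 ∧
    2 * Atq (n + 1) t q =
      (1 + t * q) * Atq n (t * q) q + (1 + t * q ^ n) * Atq n t q +
      ∑ i ∈ Finset.Ioo 0 n,
        (1 + t ^ 2 * q ^ (2 * i + 1)) * (n.choose i : ℚ) *
          Atq i t q * Atq (n - i) (t * q ^ (i + 1)) q := by
  refine ⟨Atq_one t q, ?_⟩
  have hB : ∀ (e m : ℕ) (s : ℚ), Btq e m s q = Atq m s q := fun e m s => Btq_eq_Atq e m s q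
  have hcomb : Btq 0 (n + 1) t q + Btq 1 (n + 1) t q =
      (1 + t * q) * Atq n (t * q) q + (1 + t * q ^ n) * Atq n t q +
      ∑ i ∈ Finset.Ioo 0 n,
        (1 + t ^ 2 * q ^ (2 * i + 1)) * (n.choose i : ℚ) *
          Atq i t q * Atq (n - i) (t * q ^ (i + 1)) q := by
    rw [max_split 0 n hn t q, max_split 1 n hn t q]
    simp only [hB]
    rw [if_pos (trivial : True), if_neg (show ¬ (1 : ℕ) % 2 = 0 by norm_num)]
    have hx : ∀ i ∈ Finset.Ioo 0 n,
        (if (i + 0) % 2 = 0 then t ^ 2 * q ^ (2 * i + 1) else 1) * (n.choose i : ℚ) *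
            Atq i t q * Atq (n - i) (t * q ^ (i + 1)) q
          + (if (i + 1) % 2 = 0 then t ^ 2 * q ^ (2 * i + 1) else 1) * (n.choose i : ℚ) *
            Atq i t q * Atq (n - i) (t * q ^ (i + 1)) q
          = (1 + t ^ 2 * q ^ (2 * i + 1)) * (n.choose i : ℚ) *
            Atq i t q * Atq (n - i) (t * q ^ (i + 1)) q := by
      intro i hi
      split_ifs with hc1 hc2 <;> first | (exfalso; omega) | ring
    have hsums : ∑ i ∈ Finset.Ioo 0 n,
          (if (i + 0) % 2 = 0 then t ^ 2 * q ^ (2 * i + 1) else 1) * (n.choose i : ℚ) *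
            Atq i t q * Atq (n - i) (t * q ^ (i + 1)) q
        + ∑ i ∈ Finset.Ioo 0 n,
          (if (i + 1) % 2 = 0 then t ^ 2 * q ^ (2 * i + 1) else 1) * (n.choose i : ℚ) *
            Atq i t q * Atq (n - i) (t * q ^ (i + 1)) q
        = ∑ i ∈ Finset.Ioo 0 n,
          (1 + t ^ 2 * q ^ (2 * i + 1)) * (n.choose i : ℚ) *
            Atq i t q * Atq (n - i) (t * q ^ (i + 1)) q := by
      rw [← Finset.sum_add_distrib]
      exact Finset.sum_congr rfl hx
    rw [← hsums]
    by_cases hn2 : n % 2 = 0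
    · rw [if_pos (by omega : (n + 0) % 2 = 0), if_neg (by omega : ¬ (n + 1) % 2 = 0)]
      ring
    · rw [if_neg (by omega : ¬ (n + 0) % 2 = 0), if_pos (by omega : (n + 1) % 2 = 0)]
      ring
  calc 2 * Atq (n + 1) t q = Btq 0 (n + 1) t q + Btq 1 (n + 1) t q := by
        rw [hB, hB]; ring
    _ = _ := hcomb
end

section
/- For positive integers n and m, the multiplicity of the polynomial 1+q^m in (q;q)_n := Π_{i=1}^n (1-q^i) equals ⌊n/(2m)⌋; that is, (1+q^m)^{⌊n/(2m)⌋} divides (q;q)_n in ℤ[q], but (1+q^m)^{⌊n/(2m)⌋+1} does not. -/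
/-!
Over any commutative ring, `1 + q^m` divides `1 - q^i` whenever `2m ∣ i`, and there are
`⌊n/(2m)⌋` such factors in `(q;q)_n`. Conversely, a primitive `2m`-th root of unity `ζ ∈ ℂ`
is a root of `1 + q^m`, and it is a root of the separable polynomial `1 - q^i` exactly when
`2m ∣ i`, so its multiplicity in `(q;q)_n` is only `⌊n/(2m)⌋`.
-/

open Polynomial

noncomputable def qPochhammer (R : Type*) [CommRing R] (n : ℕ) : R[X] :=
  ∏ i ∈ Finset.Icc 1 n, (1 - X ^ i)

section CommRing

variable {R : Type*} [CommRing R]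

theorem map_qPochhammer {S : Type*} [CommRing S] (f : R →+* S) (n : ℕ) :
    (qPochhammer R n).map f = qPochhammer S n := by
  simp [qPochhammer, Polynomial.map_prod]

theorem qPochhammer_ne_zero [Nontrivial R] (n : ℕ) : qPochhammer R n ≠ 0 := by
  intro h
  have heval : (qPochhammer R n).eval 0 = 1 := by
    rw [qPochhammer, eval_prod]
    refine Finset.prod_eq_one fun i hi => ?_
    simp [zero_pow (Nat.one_le_iff_ne_zero.mp (Finset.mem_Icc.mp hi).1)]
  simp [h] at heval

theorem one_add_X_pow_dvd_one_sub_X_pow {m i : ℕ} (hi : 2 * m ∣ i) :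
    (1 + X ^ m : R[X]) ∣ 1 - X ^ i := by
  obtain ⟨k, rfl⟩ := hi
  have hdvd : (1 + X ^ m : R[X]) ∣ (X ^ (2 * m)) ^ k - 1 ^ k :=
    (Dvd.intro (X ^ m - 1) (by ring)).trans (sub_dvd_pow_sub_pow _ _ k)
  rw [← pow_mul, one_pow] at hdvd
  simpa using hdvd.neg_right

theorem pow_dvd_qPochhammer_of_dvd {p : R[X]} {d : ℕ} (hp : ∀ i, d ∣ i → p ∣ 1 - X ^ i)
    (n : ℕ) : p ^ (n / d) ∣ qPochhammer R n := by
  have hcard : ((Finset.Icc 1 n).filter (d ∣ ·)).card = n / d :=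
    Nat.Ioc_filter_dvd_card_eq_div n d
  rw [← hcard, ← Finset.prod_const]
  exact (Finset.prod_dvd_prod_of_dvd _ _ fun i hi => hp i (Finset.mem_filter.mp hi).2).trans
    (Finset.prod_dvd_prod_of_subset _ _ _ (Finset.filter_subset _ _))

theorem rootMultiplicity_prod [IsDomain R] {ι : Type*} (s : Finset ι) (f : ι → R[X]) (a : R)
    (h : ∏ i ∈ s, f i ≠ 0) :
    rootMultiplicity a (∏ i ∈ s, f i) = ∑ i ∈ s, rootMultiplicity a (f i) := by
  classical
  rw [← count_roots, roots_prod _ _ h, Multiset.count_bind]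
  simp only [count_roots]
  rfl

end CommRing

section CharZero

variable {K : Type*} [Field K] [CharZero K] {ζ : K} {k : ℕ}

theorem IsPrimitiveRoot.rootMultiplicity_one_sub_X_pow (hζ : IsPrimitiveRoot ζ k) {i : ℕ}
    (hi : i ≠ 0) : rootMultiplicity ζ (1 - X ^ i) = if k ∣ i then 1 else 0 := by
  classical
  rw [← neg_sub, ← count_roots, roots_neg, count_roots, ← C_1]
  have hne : (X ^ i - C 1 : K[X]) ≠ 0 := X_pow_sub_C_ne_zero (Nat.pos_of_ne_zero hi) 1
  have hsep : (X ^ i - C 1 : K[X]).Separable :=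
    separable_X_pow_sub_C 1 (Nat.cast_ne_zero.mpr hi) one_ne_zero
  split_ifs with hki
  · refine le_antisymm (rootMultiplicity_le_one_of_separable hsep ζ) ?_
    exact (rootMultiplicity_pos hne).mpr (by simp [(hζ.pow_eq_one_iff_dvd i).mpr hki])
  · refine rootMultiplicity_eq_zero fun h => hki ((hζ.pow_eq_one_iff_dvd i).mp ?_)
    simpa [sub_eq_zero] using h

theorem IsPrimitiveRoot.rootMultiplicity_qPochhammer (hζ : IsPrimitiveRoot ζ k) (n : ℕ) :
    rootMultiplicity ζ (qPochhammer K n) = n / k := by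
  rw [qPochhammer, rootMultiplicity_prod _ _ _ (qPochhammer_ne_zero n),
    Finset.sum_congr rfl fun i hi => hζ.rootMultiplicity_one_sub_X_pow
      (Nat.one_le_iff_ne_zero.mp (Finset.mem_Icc.mp hi).1),
    Finset.sum_boole]
  exact Nat.Ioc_filter_dvd_card_eq_div n k

theorem not_one_add_X_pow_pow_dvd_qPochhammer {m : ℕ} (hm : m ≠ 0) (n : ℕ)
    (hζ : IsPrimitiveRoot ζ (2 * m)) :
    ¬ (1 + X ^ m : K[X]) ^ (n / (2 * m) + 1) ∣ qPochhammer K n := by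
  intro h
  have hroot : X - C ζ ∣ (1 + X ^ m : K[X]) := by
    rw [dvd_iff_isRoot, IsRoot, eval_add, eval_one, eval_pow, eval_X,
      (hζ.pow (by positivity) (mul_comm 2 m)).eq_neg_one_of_two_right, add_neg_cancel]
  have hmult := (le_rootMultiplicity_iff (qPochhammer_ne_zero n)).mpr
    ((pow_dvd_pow_of_dvd hroot _).trans h)
  rw [hζ.rootMultiplicity_qPochhammer] at hmult
  omega

end CharZero

theorem stmt9_general (n m : ℕ) (hm : 1 ≤ m) :
    ((1 + (Polynomial.X : Polynomial ℤ) ^ m) ^ (n / (2 * m)) ∣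
      ∏ i ∈ Finset.Icc 1 n, (1 - Polynomial.X ^ i)) ∧
    ¬ ((1 + (Polynomial.X : Polynomial ℤ) ^ m) ^ (n / (2 * m) + 1) ∣
      ∏ i ∈ Finset.Icc 1 n, (1 - Polynomial.X ^ i)) := by
  refine ⟨pow_dvd_qPochhammer_of_dvd (fun _ => one_add_X_pow_dvd_one_sub_X_pow) n, fun h => ?_⟩
  replace h : _ ∣ qPochhammer ℤ n := h
  have hC := Polynomial.map_dvd (Int.castRingHom ℂ) h
  simp only [map_qPochhammer, Polynomial.map_pow, Polynomial.map_add, Polynomial.map_one,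
    Polynomial.map_X] at hC
  exact not_one_add_X_pow_pow_dvd_qPochhammer (by omega) n
    (Complex.isPrimitiveRoot_exp (2 * m) (by omega)) hC

/-- the multiplicity of `1+q^m` in `(q;q)_n = Π_{i=1}^n (1-q^i)` is `⌊n/(2m)⌋`. -/
theorem stmt9 (n m : ℕ) (hn : 1 ≤ n) (hm : 1 ≤ m) :
    ((1 + (Polynomial.X : Polynomial ℤ) ^ m) ^ (n / (2 * m)) ∣
      ∏ i ∈ Finset.Icc 1 n, (1 - Polynomial.X ^ i)) ∧
    ¬ ((1 + (Polynomial.X : Polynomial ℤ) ^ m) ^ (n / (2 * m) + 1) ∣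
      ∏ i ∈ Finset.Icc 1 n, (1 - Polynomial.X ^ i)) :=
  stmt9_general n m hm
end

section
/- For n ≥ 1, define G_n = Π_{k=1}^{⌊log₂ n⌋} Π_{i=1}^{⌊n/2^k⌋} (1+q^i) ∈ ℤ[q]. Then G_n = Π_{m=1}^{n} Φ_{2m}(q)^{⌊n/(2m)⌋}, where Φ_k is the k-th cyclotomic polynomial. -/
/-! Since `(1 + q^i)(q^i - 1) = q^(2i) - 1`, the factor `1 + q^i` is the product of the `Φ_d`
with `d ∣ 2i`, `d ∤ i`, i.e. of the `Φ_(2m)` with `m ∣ i` and `i / m` odd. Hence `Φ_(2m)` occurs in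
`∏_{i ≤ N} (1 + q^i)` with multiplicity `⌊N/m⌋ - ⌊N/2m⌋`, and for `N = ⌊n/2^k⌋` these
multiplicities telescope over `k ≥ 1` to `⌊n/2m⌋`. -/

open Polynomial

/-- `G_n = Π_{k=1}^{⌊log₂ n⌋} Π_{i=1}^{⌊n/2^k⌋} (1+q^i)` -/
noncomputable def Gpoly (n : ℕ) : Polynomial ℤ :=
  ∏ k ∈ Finset.Icc 1 (Nat.log 2 n), ∏ i ∈ Finset.Icc 1 (n / 2 ^ k), (1 + Polynomial.X ^ i)

open Finset

theorem Nat.divisors_two_mul_sdiff_divisors (i : ℕ) :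
    (2 * i).divisors \ i.divisors = {m ∈ i.divisors | ¬ 2 * m ∣ i}.image (2 * ·) := by
  ext d
  simp only [mem_sdiff, Nat.mem_divisors, mem_image, mem_filter]
  constructor
  · rintro ⟨⟨hd, hi⟩, hdi⟩
    have hi : i ≠ 0 := by omega
    obtain ⟨m, rfl⟩ : 2 ∣ d := by
      by_contra hodd
      have hcop : d.Coprime 2 := Nat.coprime_two_right.mpr (Nat.odd_iff.mpr (by omega))
      exact hdi ⟨hcop.dvd_of_dvd_mul_left hd, hi⟩
    exact ⟨m, ⟨⟨Nat.dvd_of_mul_dvd_mul_left two_pos hd, hi⟩, fun h => hdi ⟨h, hi⟩⟩, rfl⟩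
  · rintro ⟨m, ⟨⟨hm, hi⟩, h2m⟩, rfl⟩
    exact ⟨⟨mul_dvd_mul_left 2 hm, by omega⟩, fun h => h2m h.1⟩

theorem Nat.card_filter_dvd_not_two_mul_dvd (N m : ℕ) :
    #{i ∈ Icc 1 N | m ∣ i ∧ ¬ 2 * m ∣ i} = N / m - N / (2 * m) := by
  have hsub : {i ∈ Icc 1 N | 2 * m ∣ i} ⊆ {i ∈ Icc 1 N | m ∣ i} :=
    monotone_filter_right _ fun _ _ => (Dvd.intro_left 2 rfl).trans
  rw [filter_and_not, card_sdiff_of_subset hsub, show Icc 1 N = Ioc 0 N from rfl,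
    Nat.Ioc_filter_dvd_card_eq_div, Nat.Ioc_filter_dvd_card_eq_div]

theorem Finset.sum_Icc_tsub_of_antitone {a : ℕ → ℕ} (ha : Antitone a) (K : ℕ) :
    ∑ k ∈ Icc 1 K, (a k - a (k + 1)) = a 1 - a (K + 1) := by
  induction K with
  | zero => simp
  | succ K ih =>
    rw [sum_Icc_succ_top (by omega), ih]
    have := ha (show 1 ≤ K + 1 by omega)
    have := ha (show K + 1 ≤ K + 1 + 1 by omega)
    omega

theorem Polynomial.one_add_X_pow_eq_prod_cyclotomic (R : Type*) [CommRing R] {i : ℕ}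
    (hi : i ≠ 0) :
    (1 + X ^ i : R[X]) = ∏ m ∈ i.divisors with ¬ 2 * m ∣ i, cyclotomic (2 * m) R := by
  have h := X_pow_sub_one_mul_prod_cyclotomic_eq_X_pow_sub_one_of_dvd R
    (Dvd.intro_left 2 rfl) (by omega : 2 * i ≠ 0)
  rw [Nat.divisors_two_mul_sdiff_divisors,
    prod_image (mul_right_injective₀ two_ne_zero).injOn] at h
  refine (monic_X_pow_sub_C (1 : R) hi).isRegular.left ?_
  simp only [map_one, h]
  ring

theorem Polynomial.prod_one_add_X_pow_eq_prod_cyclotomic_pow (R : Type*) [CommRing R]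
    {N M : ℕ} (hNM : N ≤ M) :
    ∏ i ∈ Icc 1 N, (1 + X ^ i : R[X])
      = ∏ m ∈ Icc 1 M, cyclotomic (2 * m) R ^ (N / m - N / (2 * m)) := by
  calc ∏ i ∈ Icc 1 N, (1 + X ^ i : R[X])
      = ∏ i ∈ Icc 1 N, ∏ m ∈ i.divisors with ¬ 2 * m ∣ i, cyclotomic (2 * m) R :=
        prod_congr rfl fun i hi => one_add_X_pow_eq_prod_cyclotomic R (by simp at hi; omega)
    _ = ∏ m ∈ Icc 1 M, ∏ i ∈ Icc 1 N with m ∣ i ∧ ¬ 2 * m ∣ i, cyclotomic (2 * m) R := by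
        refine prod_comm' fun i m => ?_
        simp only [mem_Icc, mem_filter, Nat.mem_divisors]
        constructor
        · rintro ⟨hi, ⟨hm, -⟩, h2m⟩
          have hmN : m ≤ N := (Nat.le_of_dvd hi.1 hm).trans hi.2
          exact ⟨⟨hi, hm, h2m⟩, Nat.pos_of_dvd_of_pos hm hi.1, hmN.trans hNM⟩
        · rintro ⟨⟨hi, hm, h2m⟩, -⟩
          exact ⟨hi, ⟨hm, by omega⟩, h2m⟩
    _ = ∏ m ∈ Icc 1 M, cyclotomic (2 * m) R ^ (N / m - N / (2 * m)) := by
        simp only [prod_const, Nat.card_filter_dvd_not_two_mul_dvd]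

theorem stmt10_general (n : ℕ) :
    Gpoly n = ∏ m ∈ Finset.Icc 1 n, (Polynomial.cyclotomic (2 * m) ℤ) ^ (n / (2 * m)) := by
  have hlevel : ∀ k ∈ Icc 1 (Nat.log 2 n), ∏ i ∈ Icc 1 (n / 2 ^ k), (1 + X ^ i : ℤ[X])
      = ∏ m ∈ Icc 1 n, cyclotomic (2 * m) ℤ ^ (n / 2 ^ k / m - n / 2 ^ (k + 1) / m) := by
    intro k _
    rw [prod_one_add_X_pow_eq_prod_cyclotomic_pow ℤ (Nat.div_le_self n _)]
    simp only [Nat.div_div_eq_div_mul, pow_succ, mul_assoc]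
  have hexponent : ∀ m, ∑ k ∈ Icc 1 (Nat.log 2 n), (n / 2 ^ k / m - n / 2 ^ (k + 1) / m)
      = n / (2 * m) := by
    intro m
    have hanti : Antitone fun k => n / 2 ^ k / m := fun _ _ hjk =>
      Nat.div_le_div_right (Nat.div_le_div_left (Nat.pow_le_pow_right two_pos hjk) (by positivity))
    rw [sum_Icc_tsub_of_antitone hanti, Nat.div_eq_of_lt (Nat.lt_pow_succ_log_self one_lt_two n),
      Nat.zero_div, Nat.sub_zero, pow_one, Nat.div_div_eq_div_mul]
  rw [Gpoly, prod_congr rfl hlevel, prod_comm]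
  simp only [prod_pow_eq_pow_sum, hexponent]

/-- `G_n = Π_{m=1}^{n} Φ_{2m}(q)^{⌊n/(2m)⌋}`. -/
theorem stmt10 (n : ℕ) (hn : 1 ≤ n) :
    Gpoly n = ∏ m ∈ Finset.Icc 1 n, (Polynomial.cyclotomic (2 * m) ℤ) ^ (n / (2 * m)) :=
  stmt10_general n
end

section
/- Fix a positive integer m and an integer n with n ≥ 2m. For 0 ≤ l ≤ m-1, let S_{n,l}^{(m)} = {π ∈ S_n : altmaj(π) ≡ l (mod 2m)}. Then |S_{n,l}^{(m)}| = |S_{n,l+m}^{(m)}| for each 0 ≤ l ≤ m-1. Consequently 1+q^m divides Σ_{π ∈ S_n} q^{altmaj(π)} whenever 1 ≤ m ≤ ⌊n/2⌋. -/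
open Finset Polynomial

/-- the generating polynomial of the alternating major index over `S_n` -/
noncomputable def altmajPoly (n : ℕ) : Polynomial ℤ :=
  ∑ π : Equiv.Perm (Fin n), Polynomial.X ^ altmaj π

namespace Stmt13Aux

/-- reverse the first `k` coordinates of `Fin n` -/
def revFun {n : ℕ} (k : ℕ) (hk : k ≤ n) (i : Fin n) : Fin n :=
  ⟨if (i : ℕ) < k then k - 1 - (i : ℕ) else (i : ℕ), by have := i.isLt; split <;> omega⟩

lemma revFun_val {n : ℕ} (k : ℕ) (hk : k ≤ n) (i : Fin n) :
    (revFun k hk i : ℕ) = if (i : ℕ) < k then k - 1 - (i : ℕ) else (i : ℕ) := rfl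

lemma revFun_invol {n : ℕ} (k : ℕ) (hk : k ≤ n) :
    Function.Involutive (revFun (n := n) k hk) := by
  intro i; apply Fin.ext; simp only [revFun_val]; split_ifs <;> omega

/-- the permutation reversing the first `2*m` positions -/
def rho (n m : ℕ) (hn : 2*m ≤ n) : Equiv.Perm (Fin n) := (revFun_invol (2*m) hn).toPerm

/-- the permutation reversing the first `2*m-1` positions -/
def tau (n m : ℕ) (hn : 2*m ≤ n) : Equiv.Perm (Fin n) :=
  (revFun_invol (2*m - 1) (by omega)).toPerm

lemma rho_val {n m : ℕ} (hn : 2*m ≤ n) (i : Fin n) :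
    (rho n m hn i : ℕ) = if (i : ℕ) < 2*m then 2*m - 1 - (i : ℕ) else (i : ℕ) := by
  rw [rho, Function.Involutive.coe_toPerm, revFun_val]

lemma tau_val {n m : ℕ} (hn : 2*m ≤ n) (i : Fin n) :
    (tau n m hn i : ℕ) = if (i : ℕ) < 2*m - 1 then 2*m - 2 - (i : ℕ) else (i : ℕ) := by
  rw [tau, Function.Involutive.coe_toPerm, revFun_val]
  split_ifs <;> omega

lemma rho_mul_self {n m : ℕ} (hn : 2*m ≤ n) (π : Equiv.Perm (Fin n)) :
    π * rho n m hn * rho n m hn = π := by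
  apply Equiv.ext
  intro x
  simp only [Equiv.Perm.mul_apply]
  rw [rho, Function.Involutive.coe_toPerm]
  rw [(revFun_invol (2*m) hn) x]

lemma finSucc_mk {n a : ℕ} (h : a < n) (h2 : a + 1 < n) :
    finSucc (⟨a, h⟩ : Fin n) = ⟨a + 1, h2⟩ := by
  apply Fin.ext
  show (a + 1) % n = a + 1
  exact Nat.mod_eq_of_lt h2

lemma finSucc_eq {n : ℕ} (i : Fin n) (h2 : (i : ℕ) + 1 < n) :
    finSucc i = ⟨(i : ℕ) + 1, h2⟩ := by
  apply Fin.ext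
  show ((i : ℕ) + 1) % n = (i : ℕ) + 1
  exact Nat.mod_eq_of_lt h2

/-- flip lemma: at 0-based positions `i ≤ 2m-2`, composing with `rho` negates the
alternating-descent status at the mirrored position. -/
lemma flipLem {n m : ℕ} (hm : 1 ≤ m) (hn : 2*m ≤ n) (π : Equiv.Perm (Fin n)) (i : Fin n)
    (hi : (i : ℕ) + 2 ≤ 2*m) (hA : 2*m - 2 - (i : ℕ) < n) :
    altDesAt (π * rho n m hn) i ↔ ¬ altDesAt π ⟨2*m - 2 - (i : ℕ), hA⟩ := by
  have h1 : (i : ℕ) + 1 < n := by omega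
  have hB : 2*m - 1 - (i : ℕ) < n := by omega
  have e1 : (π * rho n m hn) i = π ⟨2*m - 1 - (i:ℕ), hB⟩ := by
    rw [Equiv.Perm.mul_apply]
    congr 1
    apply Fin.ext
    rw [rho_val, if_pos (by omega)]
  have e2 : (π * rho n m hn) (finSucc i) = π ⟨2*m - 2 - (i:ℕ), hA⟩ := by
    rw [Equiv.Perm.mul_apply, finSucc_eq i h1]
    congr 1
    apply Fin.ext
    rw [rho_val]
    simp only [Fin.val_mk]
    rw [if_pos (by omega)]
    omega
  have e3 : π (finSucc (⟨2*m - 2 - (i : ℕ), hA⟩ : Fin n)) = π ⟨2*m - 1 - (i:ℕ), hB⟩ := by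
    rw [finSucc_mk hA (by omega)]
    congr 1
    apply Fin.ext
    simp only [Fin.val_mk]
    omega
  have h2 : 2*m - 2 - (i : ℕ) + 1 < n := by omega
  have hne : π ⟨2*m - 1 - (i:ℕ), hB⟩ ≠ π ⟨2*m - 2 - (i:ℕ), hA⟩ := by
    intro h
    have h' := congrArg Fin.val (π.injective h)
    simp only [Fin.val_mk] at h'
    omega
  unfold altDesAt
  rw [e1, e2, e3]
  simp only [Fin.val_mk]
  have hpar : (((i:ℕ) + 1) % 2 = 0) ↔ ((2*m - 2 - (i:ℕ) + 1) % 2 = 0) := by omega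
  by_cases hp : ((i:ℕ) + 1) % 2 = 0
  · rw [if_pos hp, if_pos (hpar.mp hp)]
    constructor
    · rintro ⟨-, hlt⟩ ⟨-, hlt'⟩
      exact absurd (lt_trans hlt' hlt) (lt_irrefl _)
    · intro h
      refine ⟨h1, ?_⟩
      have h' : ¬ (π ⟨2*m - 2 - (i:ℕ), hA⟩ < π ⟨2*m - 1 - (i:ℕ), hB⟩) :=
        fun hc => h ⟨h2, hc⟩
      rcases lt_or_gt_of_ne hne.symm with hlt | hlt
      · exact absurd hlt h'
      · exact hlt
  · rw [if_neg hp, if_neg (fun hc => hp (hpar.mpr hc))]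
    constructor
    · rintro ⟨-, hlt⟩ ⟨-, hlt'⟩
      exact absurd (lt_trans hlt' hlt) (lt_irrefl _)
    · intro h
      refine ⟨h1, ?_⟩
      have h' : ¬ (π ⟨2*m - 1 - (i:ℕ), hB⟩ < π ⟨2*m - 2 - (i:ℕ), hA⟩) :=
        fun hc => h ⟨h2, hc⟩
      rcases lt_or_gt_of_ne hne with hlt | hlt
      · exact absurd hlt h'
      · exact hlt

/-- fix lemma: at positions `≥ 2m`, composing with `rho` leaves the status unchanged -/
lemma fixLem {n m : ℕ} (hn : 2*m ≤ n) (π : Equiv.Perm (Fin n)) (i : Fin n)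
    (hi : 2*m ≤ (i : ℕ)) :
    altDesAt (π * rho n m hn) i ↔ altDesAt π i := by
  by_cases h1 : (i : ℕ) + 1 < n
  · have e1 : (π * rho n m hn) i = π i := by
      rw [Equiv.Perm.mul_apply]
      congr 1
      apply Fin.ext
      rw [rho_val, if_neg (by omega)]
    have e2 : (π * rho n m hn) (finSucc i) = π (finSucc i) := by
      rw [Equiv.Perm.mul_apply]
      congr 1
      apply Fin.ext
      rw [rho_val, finSucc_eq i h1]
      simp only [Fin.val_mk]
      rw [if_neg (by omega)]
    unfold altDesAt
    rw [e1, e2]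
  · unfold altDesAt
    constructor <;> (rintro ⟨h, -⟩; exact absurd h h1)

/-- the key shift lemma -/
lemma altmaj_rho {n m : ℕ} (hm : 1 ≤ m) (hn : 2*m ≤ n) (π : Equiv.Perm (Fin n)) :
    altmaj (π * rho n m hn) % (2*m) = (altmaj π + m) % (2*m) := by
  have key : ((altmaj (π * rho n m hn) : ℕ) : ZMod (2*m)) = ((altmaj π + m : ℕ) : ZMod (2*m)) := by
    set g : Equiv.Perm (Fin n) → Fin n → ZMod (2*m) :=
      fun σ i => if altDesAt σ i then (((i : ℕ) + 1 : ℕ) : ZMod (2*m)) else 0 with hg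
    have cast_sum : ∀ σ : Equiv.Perm (Fin n),
        ((altmaj σ : ℕ) : ZMod (2*m)) = ∑ i : Fin n, g σ i := by
      intro σ
      rw [altmaj, Nat.cast_sum, Finset.sum_filter]
    have h2m0 : ((2*m : ℕ) : ZMod (2*m)) = 0 := ZMod.natCast_self _
    set e : Fin n → ZMod (2*m) :=
      fun i => if (i : ℕ) + 2 ≤ 2*m then -(((i : ℕ) + 1 : ℕ) : ZMod (2*m)) else 0 with he
    have main : ∀ i : Fin n, g (π * rho n m hn) (tau n m hn i) = g π i + e i := by
      intro i
      by_cases hcase : (i : ℕ) + 2 ≤ 2*m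
      · have htv : ((tau n m hn i : Fin n) : ℕ) = 2*m - 2 - (i : ℕ) := by
          rw [tau_val, if_pos (by omega)]
        have hAA : 2*m - 2 - ((tau n m hn i : Fin n) : ℕ) < n := by omega
        have hflip := flipLem hm hn π (tau n m hn i) (by omega) hAA
        have hback : (⟨2*m - 2 - ((tau n m hn i : Fin n) : ℕ), hAA⟩ : Fin n) = i := by
          apply Fin.ext
          simp only [Fin.val_mk, htv]
          omega
        rw [hback] at hflip
        have hcv : ((tau n m hn i : Fin n) : ℕ) + 1 = 2*m - 1 - (i : ℕ) := by omega
        have hcast : ((2*m - 1 - (i : ℕ) : ℕ) : ZMod (2*m)) = -(((i : ℕ) + 1 : ℕ) : ZMod (2*m)) := by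
          apply eq_neg_of_add_eq_zero_left
          rw [← Nat.cast_add, show 2*m - 1 - (i:ℕ) + ((i:ℕ) + 1) = 2*m by omega, h2m0]
        simp only [hg, he, if_pos hcase]
        rw [if_congr hflip rfl rfl]
        by_cases hd : altDesAt π i
        · rw [if_neg (not_not_intro hd), if_pos hd]
          ring
        · rw [if_pos hd, if_neg hd, hcv, hcast]
          ring
      · have htv : tau n m hn i = i := by
          apply Fin.ext
          rw [tau_val, if_neg (by omega)]
        rw [htv]
        by_cases hB : (i : ℕ) + 1 = 2*m
        · have hz : (((i : ℕ) + 1 : ℕ) : ZMod (2*m)) = 0 := by rw [hB]; exact h2m0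
          simp only [hg, he, hz, if_neg (show ¬ ((i:ℕ)+2 ≤ 2*m) by omega)]
          simp
        · have hfix := fixLem hn π i (by omega)
          simp only [hg, he, if_neg (show ¬ ((i:ℕ)+2 ≤ 2*m) by omega)]
          rw [if_congr hfix rfl rfl]
          simp
    have sum_e : ∑ i : Fin n, e i = ((m : ℕ) : ZMod (2*m)) := by
      have step1 : ∑ i : Fin n, e i =
          ∑ k ∈ Finset.range n, (if k + 2 ≤ 2*m then -(((k + 1 : ℕ)) : ZMod (2*m)) else 0) :=
        Fin.sum_univ_eq_sum_range
          (fun k => if k + 2 ≤ 2*m then -(((k + 1 : ℕ)) : ZMod (2*m)) else 0) n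
      rw [step1]
      rw [← Finset.sum_subset (Finset.range_subset_range.mpr (show 2*m - 1 ≤ n by omega))
        (fun x _ hnx => by
          simp only [Finset.mem_range, not_lt] at hnx
          rw [if_neg (by omega)])]
      have hsum : ∑ k ∈ Finset.range (2*m - 1),
            (if k + 2 ≤ 2*m then -(((k + 1 : ℕ)) : ZMod (2*m)) else 0)
          = -(((∑ k ∈ Finset.range (2*m - 1), (k+1) : ℕ)) : ZMod (2*m)) := by
        rw [Nat.cast_sum, ← Finset.sum_neg_distrib]
        apply Finset.sum_congr rfl
        intro x hx
        simp only [Finset.mem_range] at hx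
        rw [if_pos (by omega)]
      rw [hsum]
      have gauss : (∑ k ∈ Finset.range (2*m - 1), (k+1)) = m * (2*m - 1) := by
        have h1 : ∑ i ∈ Finset.range (2*m - 1 + 1), i
            = (∑ i ∈ Finset.range (2*m-1), (i+1)) + 0 :=
          Finset.sum_range_succ' id (2*m - 1)
        have h2 : (∑ i ∈ Finset.range (2*m), i) * 2 = (2*m) * (2*m - 1) :=
          Finset.sum_range_id_mul_two (2*m)
        have h3 : 2*m - 1 + 1 = 2*m := by omega
        rw [h3] at h1
        have h4 : (2*m) * (2*m-1) = 2 * (m * (2*m-1)) := by ring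
        omega
      rw [gauss, Nat.cast_mul]
      have hm1 : ((2*m - 1 : ℕ) : ZMod (2*m)) = -1 := by
        apply eq_neg_of_add_eq_zero_left
        have : ((2*m - 1 : ℕ) : ZMod (2*m)) + 1 = ((2*m - 1 + 1 : ℕ) : ZMod (2*m)) := by
          push_cast; ring
        rw [this, (show 2*m - 1 + 1 = 2*m by omega), h2m0]
      rw [hm1]
      ring
    rw [cast_sum, Nat.cast_add, cast_sum]
    rw [← Equiv.sum_comp (tau n m hn) (g (π * rho n m hn))]
    calc ∑ i : Fin n, g (π * rho n m hn) (tau n m hn i)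
        = ∑ i : Fin n, (g π i + e i) := Finset.sum_congr rfl (fun i _ => main i)
      _ = (∑ i : Fin n, g π i) + ∑ i : Fin n, e i := Finset.sum_add_distrib
      _ = (∑ i : Fin n, g π i) + ((m:ℕ) : ZMod (2*m)) := by rw [sum_e]
  exact (ZMod.natCast_eq_natCast_iff _ _ _).mp key

/-- divisibility helper -/
lemma dvd_key {m a b : ℕ} (hm : 1 ≤ m) (h : a % (2*m) = (b + m) % (2*m)) :
    (1 + (X : Polynomial ℤ) ^ m) ∣ (X ^ b + X ^ a) := by
  have hdvd2m : (1 + (X : Polynomial ℤ) ^ m) ∣ (X ^ (2*m) - 1) := by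
    refine ⟨X ^ m - 1, ?_⟩
    rw [two_mul, pow_add]
    ring
  have base : ∀ c r q : ℕ, c = 2*m*q + r → (1 + (X : Polynomial ℤ) ^ m) ∣ (X ^ c - X ^ r) := by
    intro c r q hc
    have : (X : Polynomial ℤ) ^ c - X ^ r = X ^ r * ((X ^ (2*m)) ^ q - 1 ^ q) := by
      rw [hc, pow_add, ← pow_mul, one_pow, mul_comm (2*m) q]
      ring
    rw [this]
    exact Dvd.dvd.mul_left (hdvd2m.trans (sub_dvd_pow_sub_pow _ _ q)) _
  have d1 : (1 + (X : Polynomial ℤ) ^ m) ∣ (X ^ a - X ^ (a % (2*m))) :=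
    base a (a % (2*m)) (a / (2*m)) (Nat.div_add_mod a (2*m)).symm
  have d2 : (1 + (X : Polynomial ℤ) ^ m) ∣ (X ^ (b + m) - X ^ (a % (2*m))) := by
    rw [h]
    exact base (b + m) ((b+m) % (2*m)) ((b+m) / (2*m)) (Nat.div_add_mod (b+m) (2*m)).symm
  have d3 : (1 + (X : Polynomial ℤ) ^ m) ∣ (X ^ (b + m) + X ^ b) := by
    refine ⟨X ^ b, ?_⟩
    rw [pow_add]
    ring
  have expand : (X : Polynomial ℤ) ^ b + X ^ a =
      ((X ^ a - X ^ (a % (2*m))) - (X ^ (b + m) - X ^ (a % (2*m)))) + (X ^ (b + m) + X ^ b) := by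
    ring
  rw [expand]
  exact dvd_add (dvd_sub d1 d2) d3

end Stmt13Aux

open Stmt13Aux in
/-- the residue classes of `altmaj` mod `2m` are equinumerous in pairs
`l, l+m`, and consequently `1+q^m` divides `Σ_π q^{altmaj π}`. -/
theorem stmt13 (n m : ℕ) (hm : 1 ≤ m) (hn : 2 * m ≤ n) :
    (∀ l < m,
      (Finset.univ.filter (fun π : Equiv.Perm (Fin n) => altmaj π % (2 * m) = l)).card =
      (Finset.univ.filter (fun π : Equiv.Perm (Fin n) => altmaj π % (2 * m) = l + m)).card) ∧
    (1 + (Polynomial.X : Polynomial ℤ) ^ m) ∣ altmajPoly n := by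
  have shift := altmaj_rho hm hn
  have hmod : ∀ π : Equiv.Perm (Fin n),
      altmaj (π * rho n m hn) % (2*m) = ((altmaj π % (2*m)) + m) % (2*m) := by
    intro π
    rw [shift π, Nat.add_mod, Nat.mod_eq_of_lt (show m < 2*m by omega)]
  have mod_shift₁ : ∀ r : ℕ, r < 2*m → m ≤ r → (r + m) % (2*m) = r - m := by
    intro r h1 h2
    rw [Nat.mod_eq_sub_mod (by omega), Nat.mod_eq_of_lt (by omega)]
    omega
  have mod_shift₂ : ∀ r : ℕ, r < m → (r + m) % (2*m) = r + m := by
    intro r h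
    exact Nat.mod_eq_of_lt (by omega)
  constructor
  · intro l hl
    apply Finset.card_bij' (fun π _ => π * rho n m hn) (fun π _ => π * rho n m hn)
    · intro π hπ
      simp only [Finset.mem_filter, Finset.mem_univ, true_and] at hπ ⊢
      rw [hmod π, hπ, mod_shift₂ l hl]
    · intro π hπ
      simp only [Finset.mem_filter, Finset.mem_univ, true_and] at hπ ⊢
      rw [hmod π, hπ, mod_shift₁ (l + m) (by omega) (by omega)]
      omega
    · intro π _
      exact rho_mul_self hn π
    · intro π _
      exact rho_mul_self hn π
  · classical
    have split := Finset.sum_filter_add_sum_filter_not Finset.univ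
      (fun π : Equiv.Perm (Fin n) => altmaj π % (2*m) < m)
      (fun π : Equiv.Perm (Fin n) => (X : Polynomial ℤ) ^ altmaj π)
    have reindex : ∑ π ∈ Finset.univ.filter
          (fun π : Equiv.Perm (Fin n) => ¬ altmaj π % (2*m) < m),
          (X : Polynomial ℤ) ^ altmaj π
        = ∑ π ∈ Finset.univ.filter
          (fun π : Equiv.Perm (Fin n) => altmaj π % (2*m) < m),
          (X : Polynomial ℤ) ^ altmaj (π * rho n m hn) := by
      apply Finset.sum_nbij' (fun π => π * rho n m hn) (fun π => π * rho n m hn)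
      · intro π hπ
        simp only [Finset.mem_filter, Finset.mem_univ, true_and, not_lt] at hπ ⊢
        have hlt : altmaj π % (2*m) < 2*m := Nat.mod_lt _ (by omega)
        rw [hmod π, mod_shift₁ _ hlt hπ]
        omega
      · intro π hπ
        simp only [Finset.mem_filter, Finset.mem_univ, true_and, not_lt] at hπ ⊢
        rw [hmod π, mod_shift₂ _ hπ]
        omega
      · intro π _
        exact rho_mul_self hn π
      · intro π _
        exact rho_mul_self hn π
      · intro π hπ
        rw [rho_mul_self hn π]
    have combined : altmajPoly n
        = ∑ π ∈ Finset.univ.filter (fun π : Equiv.Perm (Fin n) => altmaj π % (2*m) < m),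
          ((X : Polynomial ℤ) ^ altmaj π + (X : Polynomial ℤ) ^ altmaj (π * rho n m hn)) := by
      rw [Finset.sum_add_distrib, ← reindex, altmajPoly]
      exact split.symm
    rw [combined]
    apply Finset.dvd_sum
    intro π _
    exact dvd_key hm (shift π)
end

section
/- Let π ∈ S_n with n ≥ 2m for some positive integer m. Define π' by π'(i) = π(2m+1-i) for 1 ≤ i ≤ 2m and π'(i) = π(i) for 2m < i ≤ n (reversal of the first 2m entries). Then the map π ↦ π' is an involution on S_n, and altmaj(π') ≡ altmaj(π) + m (mod 2m). -/
open Finset Polynomial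

/-- the permutation of positions reversing the first `2m` entries -/
def revFirst (n m : ℕ) (h : 2 * m ≤ n) (hm : 1 ≤ m) : Equiv.Perm (Fin n) :=
  Function.Involutive.toPerm
    (fun i => if h' : (i : ℕ) < 2 * m then ⟨2 * m - 1 - (i : ℕ), by omega⟩ else i)
    (by
      intro i
      by_cases h1 : (i : ℕ) < 2 * m
      · have h2 : 2 * m - 1 - (i : ℕ) < 2 * m := by omega
        simp only [dif_pos h1, dif_pos h2]
        exact Fin.ext (by simp; omega)
      · simp only [dif_neg h1])

lemma revFirst_apply (n m : ℕ) (h : 2 * m ≤ n) (hm : 1 ≤ m) (i : Fin n) :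
    revFirst n m h hm i =
      if h' : (i : ℕ) < 2 * m then ⟨2 * m - 1 - (i : ℕ), by omega⟩ else i := rfl

/-- the auxiliary involution reversing positions `0..2m-2` -/
def sigAux (n m : ℕ) (h : 2 * m ≤ n) (hm : 1 ≤ m) : Equiv.Perm (Fin n) :=
  Function.Involutive.toPerm
    (fun i => if h' : (i : ℕ) < 2 * m - 1 then ⟨2 * m - 2 - (i : ℕ), by omega⟩ else i)
    (by
      intro i
      by_cases h1 : (i : ℕ) < 2 * m - 1
      · have h2 : 2 * m - 2 - (i : ℕ) < 2 * m - 1 := by omega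
        simp only [dif_pos h1, dif_pos h2]
        exact Fin.ext (by simp; omega)
      · simp only [dif_neg h1])

lemma sigAux_apply (n m : ℕ) (h : 2 * m ≤ n) (hm : 1 ≤ m) (i : Fin n) :
    sigAux n m h hm i =
      if h' : (i : ℕ) < 2 * m - 1 then ⟨2 * m - 2 - (i : ℕ), by omega⟩ else i := rfl

lemma two_mul_sum_range_succ (K : ℕ) : 2 * (∑ i ∈ Finset.range K, (i + 1)) = K * (K + 1) := by
  induction K with
  | zero => simp
  | succ k ih => rw [Finset.sum_range_succ, Nat.mul_add, ih]; ring

/-- reversing the first `2m` entries is an involution on `S_n`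
shifting `altmaj` by `m` modulo `2m`. -/
theorem stmt14 (n m : ℕ) (hm : 1 ≤ m) (h : 2 * m ≤ n) (π : Equiv.Perm (Fin n)) :
    (revFirst n m h hm).trans ((revFirst n m h hm).trans π) = π ∧
    altmaj ((revFirst n m h hm).trans π) % (2 * m) = (altmaj π + m) % (2 * m) := by
  have hsymm : (revFirst n m h hm).symm = revFirst n m h hm := rfl
  have hrev : ∀ i : Fin n, revFirst n m h hm (revFirst n m h hm i) = i := by
    intro i
    conv_lhs => rw [← hsymm]
    exact Equiv.symm_apply_apply _ _
  set π' : Equiv.Perm (Fin n) := (revFirst n m h hm).trans π with hπ'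
  refine ⟨Equiv.ext fun i => ?_, ?_⟩
  · rw [Equiv.trans_apply, hπ', Equiv.trans_apply, hrev]
  -- main part
  have hk : (2 * m) ≠ 0 := by omega
  rw [← Nat.ModEq]
  rw [← ZMod.natCast_eq_natCast_iff]
  have hcast : ∀ ρ : Equiv.Perm (Fin n),
      ((altmaj ρ : ℕ) : ZMod (2 * m)) =
        ∑ i : Fin n, (if altDesAt ρ i then (((i : ℕ) + 1 : ℕ) : ZMod (2 * m)) else 0) := by
    intro ρ
    rw [altmaj, Finset.sum_filter, Nat.cast_sum]
    exact Finset.sum_congr rfl fun i _ => by split_ifs <;> simp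
  -- key termwise identity
  have key : ∀ i : Fin n,
      (if altDesAt π' (sigAux n m h hm i)
          then (((sigAux n m h hm i : ℕ) + 1 : ℕ) : ZMod (2 * m)) else 0) =
        (if altDesAt π i then (((i : ℕ) + 1 : ℕ) : ZMod (2 * m)) else 0) -
        (if (i : ℕ) < 2 * m then (((i : ℕ) + 1 : ℕ) : ZMod (2 * m)) else 0) := by
    intro i
    by_cases hi : (i : ℕ) < 2 * m - 1
    · -- reversed zone
      set j := sigAux n m h hm i with hj
      have hjv : (j : ℕ) = 2 * m - 2 - (i : ℕ) := by
        rw [hj, sigAux_apply, dif_pos hi]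
      have hi1 : (i : ℕ) + 1 < n := by omega
      have hj1 : (j : ℕ) + 1 < n := by omega
      have hfsj : finSucc j = ⟨(j : ℕ) + 1, hj1⟩ := Fin.ext (Nat.mod_eq_of_lt hj1)
      have hfsi : finSucc i = ⟨(i : ℕ) + 1, hi1⟩ := Fin.ext (Nat.mod_eq_of_lt hi1)
      have hrj : revFirst n m h hm j = ⟨(i : ℕ) + 1, hi1⟩ := by
        rw [revFirst_apply, dif_pos (show (j : ℕ) < 2 * m by omega)]
        exact Fin.ext (by simp only; omega)
      have hrj1 : revFirst n m h hm ⟨(j : ℕ) + 1, hj1⟩ = i := by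
        rw [revFirst_apply, dif_pos (show ((⟨(j : ℕ) + 1, hj1⟩ : Fin n) : ℕ) < 2 * m by
          simp only; omega)]
        exact Fin.ext (by simp only; omega)
      have hπ'j : π' j = π ⟨(i : ℕ) + 1, hi1⟩ := by
        rw [hπ', Equiv.trans_apply, hrj]
      have hπ'j1 : π' (finSucc j) = π i := by
        rw [hfsj, hπ', Equiv.trans_apply, hrj1]
      have hpar : ((j : ℕ) + 1) % 2 = ((i : ℕ) + 1) % 2 := by omega
      have hne : π ⟨(i : ℕ) + 1, hi1⟩ ≠ π i := by
        intro hEq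
        have h2 := congrArg Fin.val (π.injective hEq)
        simp only at h2
        omega
      have hiff : altDesAt π' j ↔ ¬ altDesAt π i := by
        unfold altDesAt
        rw [hπ'j, hπ'j1, hfsi, hpar]
        constructor
        · rintro ⟨-, hc⟩ ⟨-, hc'⟩
          by_cases hp : ((i : ℕ) + 1) % 2 = 0
          · rw [if_pos hp] at hc hc'; exact absurd (lt_trans hc hc') (lt_irrefl _)
          · rw [if_neg hp] at hc hc'; exact absurd (lt_trans hc hc') (lt_irrefl _)
        · intro hnd
          refine ⟨hj1, ?_⟩
          by_cases hp : ((i : ℕ) + 1) % 2 = 0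
          · rw [if_pos hp]
            have hc' : ¬ π i < π ⟨(i : ℕ) + 1, hi1⟩ := fun hc =>
              hnd ⟨hi1, by rw [if_pos hp]; exact hc⟩
            exact lt_of_le_of_ne (not_lt.mp hc') hne
          · rw [if_neg hp]
            have hc' : ¬ π ⟨(i : ℕ) + 1, hi1⟩ < π i := fun hc =>
              hnd ⟨hi1, by rw [if_neg hp]; exact hc⟩
            exact lt_of_le_of_ne (not_lt.mp hc') (Ne.symm hne)
      have hcastj : (((j : ℕ) + 1 : ℕ) : ZMod (2 * m)) =
          -(((i : ℕ) + 1 : ℕ) : ZMod (2 * m)) := by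
        have hsum : ((j : ℕ) + 1) + ((i : ℕ) + 1) = 2 * m := by omega
        have h0 : (((((j : ℕ) + 1) + ((i : ℕ) + 1)) : ℕ) : ZMod (2 * m)) = 0 := by
          rw [hsum]; exact ZMod.natCast_self _
        push_cast at h0 ⊢
        linear_combination h0
      rw [if_pos (show (i : ℕ) < 2 * m by omega)]
      by_cases hD : altDesAt π i
      · rw [if_pos hD, if_neg (by rw [hiff]; exact not_not_intro hD)]
        ring
      · rw [if_neg hD, if_pos (hiff.mpr hD), hcastj]
        ring
    · by_cases hi2 : (i : ℕ) < 2 * m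
      · -- boundary position i = 2m - 1: everything is 0 mod 2m
        have hsi : sigAux n m h hm i = i := by rw [sigAux_apply, dif_neg hi]
        have hiv : (i : ℕ) + 1 = 2 * m := by omega
        have h0 : (((i : ℕ) + 1 : ℕ) : ZMod (2 * m)) = 0 := by
          rw [hiv]; exact ZMod.natCast_self _
        rw [hsi, if_pos hi2, h0]
        split_ifs <;> simp [h0]
      · -- unchanged zone
        have hsi : sigAux n m h hm i = i := by rw [sigAux_apply, dif_neg (by omega)]
        have hiff : altDesAt π' i ↔ altDesAt π i := by
          by_cases hi1 : (i : ℕ) + 1 < n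
          · have hfsi : finSucc i = ⟨(i : ℕ) + 1, hi1⟩ := Fin.ext (Nat.mod_eq_of_lt hi1)
            have hri : revFirst n m h hm i = i := by rw [revFirst_apply, dif_neg hi2]
            have hri1 : revFirst n m h hm ⟨(i : ℕ) + 1, hi1⟩ = ⟨(i : ℕ) + 1, hi1⟩ := by
              rw [revFirst_apply, dif_neg (show ¬ ((⟨(i : ℕ) + 1, hi1⟩ : Fin n) : ℕ) < 2 * m by
                simp only; omega)]
            unfold altDesAt
            rw [hfsi, hπ']
            simp only [Equiv.trans_apply, hri, hri1]
          · unfold altDesAt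
            constructor <;> exact fun hc => absurd hc.1 hi1
        rw [hsi, if_neg hi2]
        by_cases hD : altDesAt π i
        · rw [if_pos hD, if_pos (hiff.mpr hD)]; ring
        · rw [if_neg hD, if_neg (fun hc => hD (hiff.mp hc))]; ring
  -- sum of the subtracted indicator
  have hHnat : (∑ i : Fin n, (if (i : ℕ) < 2 * m then (i : ℕ) + 1 else 0)) = m * (2 * m + 1) := by
    rw [Fin.sum_univ_eq_sum_range (fun i => if i < 2 * m then i + 1 else 0)]
    rw [← Finset.sum_subset (Finset.range_subset_range.mpr h)
      (fun x _ hx => by rw [if_neg (by simpa using hx)])]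
    have h1 : (∑ i ∈ Finset.range (2 * m), (if i < 2 * m then i + 1 else 0)) =
        ∑ i ∈ Finset.range (2 * m), (i + 1) :=
      Finset.sum_congr rfl fun i hi => if_pos (Finset.mem_range.mp hi)
    rw [h1]
    have h2 : 2 * (∑ i ∈ Finset.range (2 * m), (i + 1)) = 2 * (m * (2 * m + 1)) := by
      rw [two_mul_sum_range_succ (2 * m)]; ring
    omega
  have hH : (∑ i : Fin n, (if (i : ℕ) < 2 * m then (((i : ℕ) + 1 : ℕ) : ZMod (2 * m)) else 0))
      = ((m * (2 * m + 1) : ℕ) : ZMod (2 * m)) := by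
    rw [← hHnat, Nat.cast_sum]
    exact Finset.sum_congr rfl fun i _ => by split_ifs <;> simp
  have hmain : ((altmaj π' : ℕ) : ZMod (2 * m)) =
      ((altmaj π : ℕ) : ZMod (2 * m)) - ((m * (2 * m + 1) : ℕ) : ZMod (2 * m)) := by
    have e1 : ((altmaj π' : ℕ) : ZMod (2 * m)) =
        ∑ i : Fin n,
          ((if altDesAt π i then (((i : ℕ) + 1 : ℕ) : ZMod (2 * m)) else 0) -
            (if (i : ℕ) < 2 * m then (((i : ℕ) + 1 : ℕ) : ZMod (2 * m)) else 0)) := by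
      rw [hcast π', ← Equiv.sum_comp (sigAux n m h hm)
        (fun i => if altDesAt π' i then (((i : ℕ) + 1 : ℕ) : ZMod (2 * m)) else 0)]
      exact Finset.sum_congr rfl fun i _ => key i
    rw [e1, Finset.sum_sub_distrib, hH, hcast π]
  rw [hmain]
  have h0 : ((m * (2 * m + 1) + m : ℕ) : ZMod (2 * m)) = 0 := by
    have he : m * (2 * m + 1) + m = (2 * m) * (m + 1) := by ring
    rw [he, Nat.cast_mul, ZMod.natCast_self, zero_mul]
  push_cast at h0 ⊢
  linear_combination -h0
end

section
/- Fix m ∈ ℤ⁺ and r ∈ ℕ. Let X be a finite set and st : X → ℕ a function. Suppose that for every l ∈ ℤ/mℤ and every 0 ≤ j ≤ r-1, Σ_{x ∈ X, st(x) ≡ l (mod 2m)} C(st(x), j) = Σ_{x ∈ X, st(x) ≡ l+m (mod 2m)} C(st(x), j). Then the polynomial Σ_{x ∈ X} q^{st(x)} is divisible by (1+q^m)^r in ℤ[q]. -/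
open Finset Polynomial

/-!
Over `ℂ`, `(1 + q^m)^r` is the product of `(q - ζ)^r` over the `m` distinct roots `ζ` of
`q^m = -1`, so it suffices that the first `r` Hasse derivatives of `P = Σ_x q^{st x}` vanish at
each such `ζ`. The `j`-th one is `ζ^{-j} Σ_x C(st x, j) ζ^{st x}`; since `ζ^n` only depends on
`n mod 2m` and `ζ^{l+m} = -ζ^l`, the hypothesis cancels the residue classes `l` and `l + m`
against each other.
-/

lemma pow_X_sub_C_dvd_of_forall_hasseDeriv_eval_eq_zero {R : Type*} [CommRing R]
    {P : R[X]} {a : R} {r : ℕ} (h : ∀ i < r, (hasseDeriv i P).eval a = 0) :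
    (X - C a) ^ r ∣ P := by
  rw [← sum_taylor_eq P a, Polynomial.sum_def]
  refine Finset.dvd_sum fun i hi => ?_
  have hir : r ≤ i := by
    contrapose! hi
    rw [notMem_support_iff, taylor_coeff]
    exact h i hi
  exact (pow_dvd_pow _ hir).mul_left _

lemma pow_dvd_of_forall_root_pow_X_sub_C_dvd {K : Type*} [Field K] {S P : K[X]} (r : ℕ)
    (hS : S.Splits) (hsep : S.Separable) (h : ∀ a ∈ S.roots, (X - C a) ^ r ∣ P) :
    S ^ r ∣ P := by
  classical
  rcases eq_or_ne P 0 with rfl | hP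
  · exact dvd_zero _
  refine (hS.pow r).dvd_of_roots_le_roots (pow_ne_zero r hsep.ne_zero) ?_
  rw [roots_pow, Multiset.le_iff_count]
  intro a
  rw [Multiset.count_nsmul, count_roots P]
  by_cases ha : a ∈ S.roots
  · calc r * S.roots.count a ≤ r := mul_le_of_le_one_right r.zero_le (count_roots_le_one hsep a)
      _ ≤ rootMultiplicity a P := (le_rootMultiplicity_iff hP).2 (h a ha)
  · simp [Multiset.count_eq_zero_of_notMem ha]

lemma pow_mul_eval_hasseDeriv_X_pow {R : Type*} [CommSemiring R] (a : R) (k n : ℕ) :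
    a ^ k * (hasseDeriv k (X ^ n : R[X])).eval a = n.choose k * a ^ n := by
  rw [← monomial_one_right_eq_X_pow, hasseDeriv_monomial, eval_monomial, mul_one]
  rcases le_or_gt k n with hkn | hnk
  · rw [mul_left_comm, ← pow_add, Nat.add_sub_cancel' hkn]
  · simp [Nat.choose_eq_zero_of_lt hnk]

lemma sum_mul_pow_eq_zero_of_pow_eq_neg_one {R : Type*} [CommRing R] {ι : Type*}
    (s : Finset ι) (n : ι → ℕ) (c : ι → R) {m : ℕ} (hm : 0 < m) {ζ : R} (hζ : ζ ^ m = -1)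
    (h : ∀ l < m, ∑ x ∈ s with n x % (2 * m) = l, c x = ∑ x ∈ s with n x % (2 * m) = l + m, c x) :
    ∑ x ∈ s, c x * ζ ^ n x = 0 := by
  have hζ2m : ζ ^ (2 * m) = 1 := by rw [mul_comm, pow_mul, hζ, neg_one_sq]
  have hmaps : ∀ x ∈ s, n x % (2 * m) ∈ range (2 * m) := fun x _ =>
    mem_range.2 (Nat.mod_lt _ (by omega))
  calc ∑ x ∈ s, c x * ζ ^ n x
      = ∑ k ∈ range (2 * m), (∑ x ∈ s with n x % (2 * m) = k, c x) * ζ ^ k := by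
        rw [← sum_fiberwise_of_maps_to hmaps]
        refine sum_congr rfl fun k _ => ?_
        rw [sum_mul]
        refine sum_congr rfl fun x hx => ?_
        rw [pow_eq_pow_mod (n x) hζ2m, (mem_filter.1 hx).2]
    _ = ∑ l ∈ range m, ((∑ x ∈ s with n x % (2 * m) = l, c x) * ζ ^ l
          + (∑ x ∈ s with n x % (2 * m) = l + m, c x) * ζ ^ (l + m)) := by
        rw [two_mul, sum_range_add, sum_add_distrib]
        simp only [add_comm m]
    _ = 0 := sum_eq_zero fun l hl => by
        rw [← h l (mem_range.1 hl), pow_add, hζ]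
        ring

/-- a combinatorial criterion for divisibility of `Σ_x q^{st(x)}` by `(1+q^m)^r`. -/
theorem stmt15 (m r : ℕ) (hm : 1 ≤ m) {X : Type*} [Fintype X] (st : X → ℕ)
    (h : ∀ l < m, ∀ j < r,
      ∑ x ∈ Finset.univ.filter (fun x => st x % (2 * m) = l), (st x).choose j =
      ∑ x ∈ Finset.univ.filter (fun x => st x % (2 * m) = l + m), (st x).choose j) :
    (1 + (Polynomial.X : Polynomial ℤ) ^ m) ^ r ∣ ∑ x : X, Polynomial.X ^ st x := by
  have hmonic : ((1 + Polynomial.X ^ m : ℤ[X]) ^ r).Monic := by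
    rw [add_comm]
    exact (monic_X_pow_add_C 1 (by omega)).pow r
  rw [← map_dvd_map (Int.castRingHom ℂ) Int.cast_injective hmonic]
  have hS : (1 + Polynomial.X ^ m : ℂ[X]) = Polynomial.X ^ m - C (-1) := by simp [add_comm]
  simp only [Polynomial.map_pow, Polynomial.map_add, Polynomial.map_one, Polynomial.map_sum,
    map_X, hS]
  refine pow_dvd_of_forall_root_pow_X_sub_C_dvd r (IsAlgClosed.splits _)
    (separable_X_pow_sub_C _ (by exact_mod_cast (by omega : m ≠ 0)) (by norm_num))
    fun ζ hζ => pow_X_sub_C_dvd_of_forall_hasseDeriv_eval_eq_zero fun i hi => ?_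
  have hζm : ζ ^ m = -1 :=
    eq_neg_of_add_eq_zero_left (by simpa using (mem_roots (X_pow_sub_C_ne_zero hm _)).1 hζ)
  have hζ0 : ζ ≠ 0 := by rintro rfl; simp [zero_pow (by omega : m ≠ 0)] at hζm
  refine (mul_right_injective₀ (pow_ne_zero i hζ0)).eq_iff.1 ?_
  rw [mul_zero, map_sum, eval_finsetSum, mul_sum]
  simp only [pow_mul_eval_hasseDeriv_X_pow]
  refine sum_mul_pow_eq_zero_of_pow_eq_neg_one _ _ _ hm hζm fun l hl => ?_
  exact_mod_cast h l hl i hi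
end

section
/- The descent polynomials R_n(x) over Simsun permutations satisfy the quadratic recursion R_{n+1}(x) = R_n(x) + x Σ_{i=1}^{n} C(n,i) R_{i-1}(x) R_{n-i}(x) for all n ≥ 1, with R_0(x) = 1. -/
/-!
Split a word at its least letter, `w = α ++ m :: β`. Every restriction of `w` to the letters below
some `k > m` splits the same way, and its double descents lie in `α`, lie in `β`, or are the last
two letters of `α` followed by `m`. Hence `w` is Simsun iff `β` is Simsun and `α` is Simsun with no
restriction ending in a descent (`IsSimsunLeft`). Descents add up, plus one for the descent into
`m` when `α ≠ []`, so the descent polynomials `R` and `L` of the Simsun and left Simsun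
arrangements of a set of letters satisfy
  `R({m} ∪ S) = ∑_{T ⊆ S} x^[T ≠ ∅] L(T) R(S \ T)`   (`m < S`).
For a left Simsun word the same splitting forces the least letter of `S` into `β`; comparing the
two recursions gives `L({m} ∪ S) = R(S)`. So both polynomials depend only on the number of
letters, and grouping the subsets `T` by size gives the binomial recursion.
-/

open Finset Polynomial

/-- ordinary descent at position `i` (0-based): `π(i) > π(i+1)` -/
def desAt {n : ℕ} (π : Equiv.Perm (Fin n)) (i : Fin n) : Prop :=
  (i : ℕ) + 1 < n ∧ π (finSucc i) < π i

instance {n : ℕ} (π : Equiv.Perm (Fin n)) (i : Fin n) : Decidable (desAt π i) := by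
  unfold desAt; infer_instance

/-- number of descents -/
def des {n : ℕ} (π : Equiv.Perm (Fin n)) : ℕ :=
  (Finset.univ.filter (fun i => desAt π i)).card

/-- `π` is Simsun: for every `k`, after removing all letters `≥ k` the remaining word
has no double descent. -/
def Simsun {n : ℕ} (π : Equiv.Perm (Fin n)) : Prop :=
  ∀ k : ℕ, ∀ a b c : ℕ,
    [a, b, c] <:+: ((List.ofFn (fun i => ((π i : ℕ)))).filter (fun v => v < k)) →
    ¬ (b < a ∧ c < b)

open Classical in
/-- the descent polynomial over Simsun permutations, as a function on `ℚ` -/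
noncomputable def Rsim (n : ℕ) (x : ℚ) : ℚ :=
  ∑ π ∈ Finset.univ.filter (fun π : Equiv.Perm (Fin n) => Simsun π), x ^ des π

namespace List

def descCount : List ℕ → ℕ
  | a :: b :: t => (if b < a then 1 else 0) + descCount (b :: t)
  | _ => 0

def HasDoubleDescent (w : List ℕ) : Prop := ∃ a b c, [a, b, c] <:+: w ∧ b < a ∧ c < b

def EndsWithDescent (w : List ℕ) : Prop := ∃ a b, [a, b] <:+ w ∧ b < a

def IsSimsun (w : List ℕ) : Prop := ∀ k, ¬ (w.filter (· < k)).HasDoubleDescent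

def IsSimsunLeft (w : List ℕ) : Prop :=
  ∀ k, ¬ (w.filter (· < k)).HasDoubleDescent ∧ ¬ (w.filter (· < k)).EndsWithDescent

theorem not_hasDoubleDescent_nil : ¬ HasDoubleDescent [] := by
  rintro ⟨a, b, c, h, -⟩
  simpa using h.length_le

theorem not_endsWithDescent_nil : ¬ EndsWithDescent [] := by
  rintro ⟨a, b, h, -⟩
  simpa using h.length_le

theorem hasDoubleDescent_cons {a : ℕ} {w : List ℕ} :
    (a :: w).HasDoubleDescent ↔
      (∃ b c t, w = b :: c :: t ∧ b < a ∧ c < b) ∨ w.HasDoubleDescent := by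
  constructor
  · rintro ⟨p, q, r, h, hqp, hrq⟩
    rcases infix_cons_iff.1 h with ⟨t, ht⟩ | h
    · obtain ⟨rfl, rfl⟩ := cons_eq_cons.1 ht
      exact Or.inl ⟨q, r, t, rfl, hqp, hrq⟩
    · exact Or.inr ⟨p, q, r, h, hqp, hrq⟩
  · rintro (⟨b, c, t, rfl, hba, hcb⟩ | ⟨p, q, r, h, hqp, hrq⟩)
    · exact ⟨a, b, c, ⟨[], t, rfl⟩, hba, hcb⟩
    · exact ⟨p, q, r, h.trans (infix_cons (infix_refl _)), hqp, hrq⟩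

theorem endsWithDescent_cons {a : ℕ} {w : List ℕ} :
    (a :: w).EndsWithDescent ↔ (∃ b, w = [b] ∧ b < a) ∨ w.EndsWithDescent := by
  constructor
  · rintro ⟨p, q, h, hqp⟩
    rcases suffix_cons_iff.1 h with h | h
    · obtain ⟨rfl, rfl⟩ := cons_eq_cons.1 h
      exact Or.inl ⟨q, rfl, hqp⟩
    · exact Or.inr ⟨p, q, h, hqp⟩
  · rintro (⟨b, rfl, hba⟩ | ⟨p, q, h, hqp⟩)
    · exact ⟨a, b, suffix_refl _, hba⟩
    · exact ⟨p, q, h.trans (suffix_cons _ _), hqp⟩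

theorem isSimsun_nil : IsSimsun [] := fun _ => not_hasDoubleDescent_nil

theorem isSimsunLeft_nil : IsSimsunLeft [] :=
  fun _ => ⟨not_hasDoubleDescent_nil, not_endsWithDescent_nil⟩

section SplitAtMin

variable {α β : List ℕ} {m : ℕ}

theorem hasDoubleDescent_append_cons (hα : ∀ a ∈ α, m < a) (hβ : ∀ b ∈ β, m < b) :
    (α ++ m :: β).HasDoubleDescent ↔
      α.HasDoubleDescent ∨ β.HasDoubleDescent ∨ α.EndsWithDescent := by
  induction α with
  | nil =>
    have : ¬ ∃ b c t, β = b :: c :: t ∧ b < m ∧ c < b := by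
      rintro ⟨b, c, t, rfl, hbm, -⟩
      exact (hβ b mem_cons_self).not_gt hbm
    simp only [nil_append, hasDoubleDescent_cons, this, not_hasDoubleDescent_nil,
      not_endsWithDescent_nil, false_or, or_false]
  | cons a α ih =>
    have key : (∃ b c t, α ++ m :: β = b :: c :: t ∧ b < a ∧ c < b) ↔
        (∃ b c t, α = b :: c :: t ∧ b < a ∧ c < b) ∨ ∃ b, α = [b] ∧ b < a := by
      rcases α with _ | ⟨b, _ | ⟨c, t⟩⟩
      · refine iff_of_false ?_ (by simp)
        rintro ⟨b, c, t, h, -, hcb⟩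
        obtain ⟨rfl, rfl⟩ := cons_eq_cons.1 h
        exact (hβ c mem_cons_self).not_gt hcb
      · simp [hα b (by simp)]
      · simp
    rw [cons_append, hasDoubleDescent_cons, ih (fun x hx => hα x (mem_cons_of_mem _ hx)),
      hasDoubleDescent_cons, endsWithDescent_cons, key]
    simp only [or_assoc, or_left_comm]

theorem endsWithDescent_append_cons (hα : ∀ a ∈ α, m < a) (hβ : ∀ b ∈ β, m < b) :
    (α ++ m :: β).EndsWithDescent ↔ β.EndsWithDescent ∨ (β = [] ∧ α ≠ []) := by
  induction α with
  | nil =>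
    have : ¬ ∃ b, β = [b] ∧ b < m := by
      rintro ⟨b, rfl, hbm⟩
      exact (hβ b mem_cons_self).not_gt hbm
    simp only [nil_append, endsWithDescent_cons, this, false_or, ne_eq, not_true_eq_false,
      and_false, or_false]
  | cons a α ih =>
    have key : (∃ b, α ++ m :: β = [b] ∧ b < a) ↔ α = [] ∧ β = [] := by
      rcases α with _ | ⟨b, α⟩
      · simp [hα a mem_cons_self]
      · simp
    rw [cons_append, endsWithDescent_cons, ih (fun x hx => hα x (mem_cons_of_mem _ hx)), key]
    have := cons_ne_nil a α
    tauto

theorem descCount_cons_of_lt (hβ : ∀ b ∈ β, m < b) : descCount (m :: β) = descCount β := by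
  rcases β with _ | ⟨b, t⟩
  · rfl
  · rw [descCount, if_neg (hβ b mem_cons_self).not_gt, zero_add]

theorem descCount_append_cons (hα : ∀ a ∈ α, m < a) (hβ : ∀ b ∈ β, m < b) :
    descCount (α ++ m :: β) = descCount α + descCount β + if α = [] then 0 else 1 := by
  induction α with
  | nil => rw [nil_append, descCount_cons_of_lt hβ, if_pos rfl, add_zero]; exact (zero_add _).symm
  | cons a α ih =>
    rw [if_neg (cons_ne_nil a α)]
    rcases α with _ | ⟨b, t⟩
    · rw [cons_append, nil_append, descCount, if_pos (hα a mem_cons_self),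
        descCount_cons_of_lt hβ, show [a].descCount = 0 from rfl]
      omega
    · rw [cons_append, cons_append, descCount, ← cons_append,
        ih (fun x hx => hα x (mem_cons_of_mem _ hx)), if_neg (cons_ne_nil b t), descCount]
      omega

theorem filter_lt_append_cons_eq_nil (hα : ∀ a ∈ α, m < a) (hβ : ∀ b ∈ β, m < b) {k : ℕ}
    (hk : k ≤ m) : (α ++ m :: β).filter (· < k) = [] ∧ α.filter (· < k) = [] ∧
      β.filter (· < k) = [] := by
  simp only [filter_eq_nil_iff, mem_append, mem_cons, decide_eq_true_eq, not_lt]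
  refine ⟨?_, fun a ha => hk.trans (hα a ha).le, fun b hb => hk.trans (hβ b hb).le⟩
  rintro c (hc | rfl | hc)
  exacts [hk.trans (hα c hc).le, hk, hk.trans (hβ c hc).le]

theorem hasDoubleDescent_filter_append_cons (hα : ∀ a ∈ α, m < a) (hβ : ∀ b ∈ β, m < b)
    (k : ℕ) : ((α ++ m :: β).filter (· < k)).HasDoubleDescent ↔
      (α.filter (· < k)).HasDoubleDescent ∨ (β.filter (· < k)).HasDoubleDescent ∨
        (α.filter (· < k)).EndsWithDescent := by
  rcases lt_or_ge m k with hk | hk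
  · rw [filter_append, filter_cons_of_pos (by simpa using hk)]
    exact hasDoubleDescent_append_cons (fun a ha => hα a (mem_filter.1 ha).1)
      (fun b hb => hβ b (mem_filter.1 hb).1)
  · obtain ⟨h, hα', hβ'⟩ := filter_lt_append_cons_eq_nil hα hβ hk
    simp only [h, hα', hβ', not_hasDoubleDescent_nil, not_endsWithDescent_nil, or_self]

theorem endsWithDescent_filter_append_cons (hα : ∀ a ∈ α, m < a) (hβ : ∀ b ∈ β, m < b)
    (k : ℕ) : ((α ++ m :: β).filter (· < k)).EndsWithDescent ↔
      (β.filter (· < k)).EndsWithDescent ∨ (β.filter (· < k) = [] ∧ α.filter (· < k) ≠ []) := by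
  rcases lt_or_ge m k with hk | hk
  · rw [filter_append, filter_cons_of_pos (by simpa using hk)]
    exact endsWithDescent_append_cons (fun a ha => hα a (mem_filter.1 ha).1)
      (fun b hb => hβ b (mem_filter.1 hb).1)
  · obtain ⟨h, hα', hβ'⟩ := filter_lt_append_cons_eq_nil hα hβ hk
    simp only [h, hα', hβ', not_endsWithDescent_nil, ne_eq, not_true_eq_false, and_false,
      or_self]

theorem isSimsun_append_cons (hα : ∀ a ∈ α, m < a) (hβ : ∀ b ∈ β, m < b) :
    IsSimsun (α ++ m :: β) ↔ IsSimsunLeft α ∧ IsSimsun β := by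
  simp only [IsSimsun, IsSimsunLeft, hasDoubleDescent_filter_append_cons hα hβ, ← forall_and]
  exact forall_congr' fun k => by tauto

theorem forall_filter_lt_eq_nil_imp_iff :
    (∀ k, β.filter (· < k) = [] → α.filter (· < k) = []) ↔ ∀ a ∈ α, ∃ b ∈ β, b ≤ a := by
  simp only [filter_eq_nil_iff, decide_eq_true_eq, not_lt]
  refine ⟨fun h a ha => ?_, fun h k hk a ha => ?_⟩
  · by_contra! hlt
    exact (h (a + 1) (fun b hb => hlt b hb) a ha).not_gt a.lt_succ_self
  · obtain ⟨b, hb, hba⟩ := h a ha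
    exact (hk b hb).trans hba

theorem isSimsunLeft_append_cons (hα : ∀ a ∈ α, m < a) (hβ : ∀ b ∈ β, m < b) :
    IsSimsunLeft (α ++ m :: β) ↔
      IsSimsunLeft α ∧ IsSimsunLeft β ∧ ∀ a ∈ α, ∃ b ∈ β, b ≤ a := by
  simp only [IsSimsunLeft, hasDoubleDescent_filter_append_cons hα hβ,
    endsWithDescent_filter_append_cons hα hβ, ← forall_filter_lt_eq_nil_imp_iff, ← forall_and]
  exact forall_congr' fun k => by tauto

end SplitAtMin

theorem descCount_eq_sum : ∀ w : List ℕ, w.descCount =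
    ∑ i ∈ Finset.range w.length, if i + 1 < w.length ∧ w.getD (i + 1) 0 < w.getD i 0 then 1 else 0
  | [] => rfl
  | [a] => by simp [descCount]
  | a :: b :: t => by
    rw [descCount, descCount_eq_sum (b :: t)]
    conv_rhs => rw [length_cons, Finset.sum_range_succ']
    simp only [getD_cons_succ, getD_cons_zero, length_cons, Nat.add_lt_add_iff_right,
      Nat.zero_lt_succ, true_and]
    exact add_comm _ _

end List

namespace Simsun

open List

def wordsOn (S : Finset ℕ) : Finset (List ℕ) := ⟨S.val.lists, Multiset.lists_nodup_finset S⟩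

variable {S T : Finset ℕ} {w : List ℕ} {m : ℕ}

theorem mem_wordsOn : w ∈ wordsOn S ↔ (w : Multiset ℕ) = S.val := by
  rw [wordsOn, Finset.mem_mk, Multiset.mem_lists_iff, eq_comm]
  rfl

theorem mem_iff_of_mem_wordsOn (hw : w ∈ wordsOn S) {a : ℕ} : a ∈ w ↔ a ∈ S := by
  rw [← Multiset.mem_coe, mem_wordsOn.1 hw, Finset.mem_val]

theorem mem_wordsOn_iff_nodup : w ∈ wordsOn S ↔ w.Nodup ∧ ∀ a, a ∈ w ↔ a ∈ S := by
  refine ⟨fun hw => ⟨?_, fun a => mem_iff_of_mem_wordsOn hw⟩, fun ⟨hnd, h⟩ => ?_⟩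
  · exact Multiset.coe_nodup.1 (mem_wordsOn.1 hw ▸ S.nodup)
  · refine mem_wordsOn.2 ((Multiset.Nodup.ext (Multiset.coe_nodup.2 hnd) S.nodup).2 fun a => ?_)
    rw [Multiset.mem_coe, Finset.mem_val, h]

theorem lt_of_mem_wordsOn (hm : ∀ a ∈ S, m < a) (hT : T ⊆ S) (hw : w ∈ wordsOn T) :
    ∀ a ∈ w, m < a :=
  fun a ha => hm a (hT ((mem_iff_of_mem_wordsOn hw).1 ha))

theorem wordsOn_empty : wordsOn ∅ = {[]} := by
  ext w
  rw [mem_wordsOn, Finset.empty_val, Multiset.coe_eq_zero, Finset.mem_singleton]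

theorem sum_wordsOn_insert {M : Type*} [AddCommMonoid M] (hm : m ∉ S) (F : List ℕ → M) :
    ∑ w ∈ wordsOn (insert m S), F w =
      ∑ T ∈ S.powerset, ∑ α ∈ wordsOn T, ∑ β ∈ wordsOn (S \ T), F (α ++ m :: β) := by
  rw [← Finset.sum_congr rfl fun T _ => Finset.sum_product' (wordsOn T) (wordsOn (S \ T))
    fun α β => F (α ++ m :: β), ← Finset.sum_sigma S.powerset
      (fun T => wordsOn T ×ˢ wordsOn (S \ T)) fun p => F (p.2.1 ++ m :: p.2.2)]
  symm
  refine Finset.sum_bij (fun p _ => p.2.1 ++ m :: p.2.2) ?_ ?_ ?_ (fun _ _ => rfl)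
  · rintro ⟨T, α, β⟩ hp
    simp only [Finset.mem_sigma, Finset.mem_product, Finset.mem_powerset, mem_wordsOn] at hp ⊢
    obtain ⟨hT, hα, hβ⟩ := hp
    rw [← Multiset.coe_add, ← Multiset.cons_coe, hα, hβ, Finset.insert_val_of_notMem hm,
      Multiset.add_cons, Finset.sdiff_val, add_tsub_cancel_of_le (Finset.val_le_iff.2 hT)]
  · rintro ⟨T, α, β⟩ hp ⟨T', α', β'⟩ hp' h
    simp only [Finset.mem_sigma, Finset.mem_product, Finset.mem_powerset] at hp hp'
    have hmα : m ∉ α := fun h => hm (hp.1 ((mem_iff_of_mem_wordsOn hp.2.1).1 h))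
    have hmβ : m ∉ β := fun h => hm (Finset.mem_sdiff.1 ((mem_iff_of_mem_wordsOn hp.2.2).1 h)).1
    obtain ⟨rfl, -, rfl⟩ := (append_cons_inj_of_notMem hmα hmβ).1 h
    obtain rfl : T = T' := Finset.val_inj.1 <|
      (mem_wordsOn.1 hp.2.1).symm.trans (mem_wordsOn.1 hp'.2.1)
    rfl
  · intro w hw
    obtain ⟨s, t, rfl⟩ := append_of_mem ((mem_iff_of_mem_wordsOn hw).2 (S.mem_insert_self m))
    have hst : (s : Multiset ℕ) + t = S.val := by
      have := mem_wordsOn.1 hw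
      rw [← Multiset.coe_add, ← Multiset.cons_coe, Finset.insert_val_of_notMem hm,
        Multiset.add_cons] at this
      exact Multiset.cons_inj_right m |>.1 this
    have hs : (s.toFinset).val = s := by
      rw [List.toFinset_val, List.dedup_eq_self.2]
      have := S.nodup
      rw [← hst] at this
      exact (Multiset.nodup_add.1 this).1
    refine ⟨⟨s.toFinset, s, t⟩, ?_, rfl⟩
    simp only [Finset.mem_sigma, Finset.mem_product, Finset.mem_powerset, mem_wordsOn,
      ← Finset.val_le_iff, hs, Finset.sdiff_val, ← hst, add_tsub_cancel_left]
    exact ⟨Multiset.le_add_right _ _, trivial, trivial⟩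

open Classical in
noncomputable def descPoly {R : Type*} [CommSemiring R] (P : List ℕ → Prop) (S : Finset ℕ)
    (x : R) : R :=
  ∑ w ∈ wordsOn S with P w, x ^ w.descCount

variable {R : Type*} [CommSemiring R] {x : R}

theorem descPoly_empty {P : List ℕ → Prop} (hP : P []) : descPoly P ∅ x = 1 := by
  simp [descPoly, wordsOn_empty, Finset.filter_singleton, hP, descCount]

theorem descPoly_insert {P Pα Pβ : List ℕ → Prop} (c : Finset ℕ → Prop) [DecidablePred c]
    (hm : ∀ a ∈ S, m < a)
    (h : ∀ T ⊆ S, ∀ α ∈ wordsOn T, ∀ β ∈ wordsOn (S \ T),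
      P (α ++ m :: β) ↔ c T ∧ Pα α ∧ Pβ β) :
    descPoly P (insert m S) x = ∑ T ∈ S.powerset with c T,
      (if T = ∅ then 1 else x) * descPoly Pα T x * descPoly Pβ (S \ T) x := by
  classical
  simp only [descPoly, Finset.sum_filter]
  rw [sum_wordsOn_insert fun h => (hm m h).false]
  refine Finset.sum_congr rfl fun T hT => ?_
  rw [Finset.mem_powerset] at hT
  by_cases hc : c T
  · rw [if_pos hc, mul_assoc, Finset.sum_mul_sum, Finset.mul_sum]
    refine Finset.sum_congr rfl fun α hα => ?_
    rw [Finset.mul_sum]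
    refine Finset.sum_congr rfl fun β hβ => ?_
    have hαT : α = [] ↔ T = ∅ := by
      rw [← Multiset.coe_eq_zero, mem_wordsOn.1 hα, Finset.val_eq_zero]
    rw [h T hT α hα β hβ, descCount_append_cons (lt_of_mem_wordsOn hm hT hα)
      (lt_of_mem_wordsOn hm Finset.sdiff_subset hβ)]
    simp only [hαT, hc, true_and]
    split_ifs <;> simp_all [pow_add, mul_comm]
  · rw [if_neg hc]
    refine Finset.sum_eq_zero fun α hα => Finset.sum_eq_zero fun β hβ => ?_
    rw [if_neg fun hP => hc ((h T hT α hα β hβ).1 hP).1]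

theorem descPoly_isSimsun_insert (hm : ∀ a ∈ S, m < a) :
    descPoly IsSimsun (insert m S) x = ∑ T ∈ S.powerset,
      (if T = ∅ then 1 else x) * descPoly IsSimsunLeft T x * descPoly IsSimsun (S \ T) x := by
  rw [descPoly_insert (fun _ => True) hm, Finset.filter_true]
  intro T hT α hα β hβ
  rw [isSimsun_append_cons (lt_of_mem_wordsOn hm hT hα)
    (lt_of_mem_wordsOn hm Finset.sdiff_subset hβ), true_and]

theorem descPoly_isSimsunLeft_insert (hm : ∀ a ∈ S, m < a) :
    descPoly IsSimsunLeft (insert m S) x = ∑ T ∈ S.powerset with ∀ a ∈ T, ∃ b ∈ S \ T, b ≤ a,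
      (if T = ∅ then 1 else x) * descPoly IsSimsunLeft T x * descPoly IsSimsunLeft (S \ T) x := by
  refine descPoly_insert _ hm fun T hT α hα β hβ => ?_
  rw [isSimsunLeft_append_cons (lt_of_mem_wordsOn hm hT hα)
    (lt_of_mem_wordsOn hm Finset.sdiff_subset hβ)]
  simp only [mem_iff_of_mem_wordsOn hα, mem_iff_of_mem_wordsOn hβ]
  tauto

theorem descPoly_isSimsunLeft_insert_eq (hm : ∀ a ∈ S, m < a) :
    descPoly IsSimsunLeft (insert m S) x = descPoly IsSimsun S x := by
  induction h : S.card using Nat.strong_induction_on generalizing S m with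
  | _ n ih =>
  subst h
  rcases S.eq_empty_or_nonempty with rfl | hS
  · rw [descPoly_isSimsunLeft_insert hm]
    simp [Finset.filter_singleton, descPoly_empty isSimsunLeft_nil, descPoly_empty isSimsun_nil]
  set μ := S.min' hS
  have hμ : ∀ a ∈ S.erase μ, μ < a := fun a => S.min'_lt_of_mem_erase_min' hS
  have hfilter : {T ∈ S.powerset | ∀ a ∈ T, ∃ b ∈ S \ T, b ≤ a} = (S.erase μ).powerset := by
    ext T
    simp only [Finset.mem_filter, Finset.mem_powerset, Finset.subset_erase]
    refine ⟨fun ⟨hTS, hT⟩ => ⟨hTS, fun hμT => ?_⟩, fun ⟨hTS, hμT⟩ => ⟨hTS, fun a ha => ?_⟩⟩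
    · obtain ⟨b, hb, hbμ⟩ := hT μ hμT
      obtain rfl : b = μ := le_antisymm hbμ (S.min'_le b (Finset.mem_sdiff.1 hb).1)
      exact (Finset.mem_sdiff.1 hb).2 hμT
    · exact ⟨μ, Finset.mem_sdiff.2 ⟨S.min'_mem hS, hμT⟩, S.min'_le a (hTS ha)⟩
  rw [descPoly_isSimsunLeft_insert hm, hfilter, ← Finset.insert_erase (S.min'_mem hS),
    descPoly_isSimsun_insert hμ, Finset.insert_erase (S.min'_mem hS)]
  refine Finset.sum_congr rfl fun T hT => ?_
  rw [Finset.mem_powerset] at hT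
  have hsdiff : S \ T = insert μ (S.erase μ \ T) := by
    rw [← Finset.insert_sdiff_of_notMem _ fun h => Finset.notMem_erase μ S (hT h),
      Finset.insert_erase (S.min'_mem hS)]
  rw [hsdiff, ih _ ?_ (fun a ha => hμ a (Finset.mem_sdiff.1 ha).1) rfl]
  exact (Finset.card_le_card Finset.sdiff_subset).trans_lt
    (Finset.card_erase_lt_of_mem (S.min'_mem hS))

theorem descPoly_isSimsunLeft_of_nonempty (hT : T.Nonempty) :
    descPoly IsSimsunLeft T x = descPoly IsSimsun (T.erase (T.min' hT)) x := by
  conv_lhs => rw [← Finset.insert_erase (T.min'_mem hT)]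
  exact descPoly_isSimsunLeft_insert_eq fun a => T.min'_lt_of_mem_erase_min' hT

theorem descPoly_isSimsun_insert_eq_sum (hm : ∀ a ∈ S, m < a)
    (ih : ∀ T ⊆ S, descPoly IsSimsun T x = descPoly IsSimsun (Finset.range T.card) x) :
    descPoly IsSimsun (insert m S) x = ∑ j ∈ Finset.range (S.card + 1), (S.card.choose j : R) *
      ((if j = 0 then 1 else x * descPoly IsSimsun (Finset.range (j - 1)) x) *
        descPoly IsSimsun (Finset.range (S.card - j)) x) := by
  simp only [← nsmul_eq_mul]
  rw [← Finset.sum_powerset_apply_card, descPoly_isSimsun_insert hm]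
  refine Finset.sum_congr rfl fun T hT => ?_
  rw [Finset.mem_powerset] at hT
  rw [ih _ Finset.sdiff_subset, Finset.card_sdiff_of_subset hT, mul_assoc]
  rcases T.eq_empty_or_nonempty with rfl | hT'
  · simp [descPoly_empty isSimsunLeft_nil]
  · rw [descPoly_isSimsunLeft_of_nonempty hT', ih _ ((Finset.erase_subset _ _).trans hT),
      Finset.card_erase_of_mem (T.min'_mem hT'), if_neg hT'.ne_empty,
      if_neg (Finset.card_ne_zero.2 hT'), mul_assoc]

theorem descPoly_isSimsun_eq_range_card (S : Finset ℕ) :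
    descPoly IsSimsun S x = descPoly IsSimsun (Finset.range S.card) x := by
  induction h : S.card using Nat.strong_induction_on generalizing S with
  | _ n ih =>
  subst h
  rcases S.eq_empty_or_nonempty with rfl | hS
  · rfl
  set S' := S.erase (S.min' hS)
  have hcard : S'.card + 1 = S.card := Finset.card_erase_add_one (S.min'_mem hS)
  have ih' : ∀ U, U.card ≤ S'.card → descPoly IsSimsun U x =
      descPoly IsSimsun (Finset.range U.card) x := fun U hU => ih _ (by omega) U rfl
  have hpos : ∀ a ∈ (Finset.range S'.card).map ⟨(· + 1), add_left_injective 1⟩, 0 < a :=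
    fun a ha => by obtain ⟨b, -, rfl⟩ := Finset.mem_map.1 ha; exact b.succ_pos
  conv_lhs => rw [← Finset.insert_erase (S.min'_mem hS)]
  rw [← hcard, Finset.range_add_one',
    descPoly_isSimsun_insert_eq_sum (fun a => S.min'_lt_of_mem_erase_min' hS)
      fun T hT => ih' T (Finset.card_le_card hT),
    descPoly_isSimsun_insert_eq_sum hpos fun T hT => ih' T ?_, Finset.card_map, Finset.card_range]
  simpa using Finset.card_le_card hT

theorem descPoly_isSimsun_range_succ (n : ℕ) :
    descPoly IsSimsun (Finset.range (n + 1)) x = ∑ j ∈ Finset.range (n + 1), (n.choose j : R) *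
      ((if j = 0 then 1 else x * descPoly IsSimsun (Finset.range (j - 1)) x) *
        descPoly IsSimsun (Finset.range (n - j)) x) := by
  conv_lhs => rw [Finset.range_add_one']
  rw [descPoly_isSimsun_insert_eq_sum ?_ fun T _ => descPoly_isSimsun_eq_range_card T,
    Finset.card_map, Finset.card_range]
  exact fun a ha => by obtain ⟨b, -, rfl⟩ := Finset.mem_map.1 ha; exact b.succ_pos

variable {n : ℕ}

theorem des_eq_descCount (π : Equiv.Perm (Fin n)) :
    des π = (List.ofFn fun i => (π i : ℕ)).descCount := by
  have hget : ∀ j (hj : j < n), (List.ofFn fun i => (π i : ℕ)).getD j 0 = π ⟨j, hj⟩ := by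
    intro j hj
    simp [getD_eq_getElem?_getD, hj]
  rw [descCount_eq_sum, length_ofFn, des, Finset.card_filter,
    ← Fin.sum_univ_eq_sum_range (fun i => if i + 1 < n ∧ _ then 1 else 0)]
  refine Finset.sum_congr rfl fun i _ => if_congr ?_ rfl rfl
  refine and_congr_right fun h => ?_
  rw [hget _ h, hget _ i.isLt, Fin.lt_def]
  have : finSucc i = ⟨i + 1, h⟩ := Fin.ext (Nat.mod_eq_of_lt h)
  rw [this]

theorem simsun_iff_isSimsun (π : Equiv.Perm (Fin n)) :
    Simsun π ↔ (List.ofFn fun i => (π i : ℕ)).IsSimsun := by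
  simp [Simsun, IsSimsun, HasDoubleDescent]

theorem ofFn_mem_wordsOn_range (π : Equiv.Perm (Fin n)) :
    (List.ofFn fun i => (π i : ℕ)) ∈ wordsOn (Finset.range n) := by
  refine mem_wordsOn_iff_nodup.2 ⟨nodup_ofFn.2 (Fin.val_injective.comp π.injective), fun a => ?_⟩
  rw [mem_ofFn, Finset.mem_range]
  exact ⟨fun ⟨i, h⟩ => h ▸ (π i).isLt, fun ha => ⟨π.symm ⟨a, ha⟩, by simp⟩⟩

theorem exists_perm_ofFn_eq {w : List ℕ} (hw : w ∈ wordsOn (Finset.range n)) :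
    ∃ π : Equiv.Perm (Fin n), (List.ofFn fun i => (π i : ℕ)) = w := by
  obtain ⟨hnd, hmem⟩ := mem_wordsOn_iff_nodup.1 hw
  have hlen : w.length = n := by
    simpa using congrArg Multiset.card (mem_wordsOn.1 hw)
  let f : Fin n → Fin n := fun i =>
    ⟨w[i.1]'(hlen ▸ i.2), Finset.mem_range.1 ((hmem _).1 (getElem_mem _))⟩
  have hf : Function.Injective f := fun i j h =>
    Fin.ext ((hnd.getElem_inj_iff).1 (congrArg Fin.val h))
  refine ⟨Equiv.ofBijective f (Finite.injective_iff_bijective.1 hf), ?_⟩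
  exact ext_getElem (by simp [hlen]) fun i _ _ => by simp [f]

theorem Rsim_eq_descPoly (n : ℕ) (x : ℚ) : Rsim n x = descPoly IsSimsun (Finset.range n) x := by
  rw [Rsim, descPoly, Finset.sum_filter, Finset.sum_filter]
  refine Finset.sum_nbij (fun π => List.ofFn fun i => (π i : ℕ))
    (fun π _ => ofFn_mem_wordsOn_range π) ?_ ?_ fun π _ => ?_
  · intro π _ σ _ h
    exact Equiv.ext fun i => Fin.val_injective (congrFun (List.ofFn_inj.1 h) i)
  · intro w hw
    obtain ⟨π, hπ⟩ := exists_perm_ofFn_eq hw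
    exact ⟨π, Finset.mem_coe.2 (Finset.mem_univ π), hπ⟩
  · rw [des_eq_descCount, simsun_iff_isSimsun π]

end Simsun

theorem stmt17_general (n : ℕ) (x : ℚ) :
    Rsim 0 x = 1 ∧
    Rsim (n + 1) x =
      Rsim n x + x * ∑ i ∈ Finset.Icc 1 n,
        (n.choose i : ℚ) * Rsim (i - 1) x * Rsim (n - i) x := by
  simp only [Simsun.Rsim_eq_descPoly]
  refine ⟨Simsun.descPoly_empty List.isSimsun_nil, ?_⟩
  rw [Simsun.descPoly_isSimsun_range_succ, Finset.range_eq_Ico,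
    Finset.sum_eq_sum_Ico_succ_bot n.succ_pos, Nat.succ_eq_add_one, zero_add,
    Finset.Ico_add_one_right_eq_Icc, Finset.mul_sum]
  simp only [Nat.choose_zero_right, Nat.cast_one, if_true, Nat.sub_zero, one_mul]
  refine congrArg (_ + ·) (Finset.sum_congr rfl fun i hi => ?_)
  rw [if_neg (Nat.one_le_iff_ne_zero.1 (Finset.mem_Icc.1 hi).1)]
  ring

/-- quadratic recursion for the Simsun descent polynomials. -/
theorem stmt17 (n : ℕ) (hn : 1 ≤ n) (x : ℚ) :
    Rsim 0 x = 1 ∧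
    Rsim (n + 1) x =
      Rsim n x + x * ∑ i ∈ Finset.Icc 1 n,
        (n.choose i : ℚ) * Rsim (i - 1) x * Rsim (n - i) x :=
  stmt17_general n x
end

section
/- For all n ≥ 0, Â_{2n+1}(-1) = E_{2n+1}, where Â_n(t) = Σ_{π ∈ S_n} t^{altdes(π)} and E_{2n+1} is the odd Euler number (tangent number), i.e., the number of down-up alternating permutations of length 2n+1. Equivalently, Σ_{n≥0} Â_{2n+1}(-1) z^{2n+1}/(2n+1)! = tan(z) and Â_{2n}(-1) = 0 for n ≥ 1. -/
open Finset Polynomial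

/-- `π` is down-up alternating: `π(1) > π(2) < π(3) > π(4) < ⋯` -/
def DownUp {n : ℕ} (π : Equiv.Perm (Fin n)) : Prop :=
  ∀ i : Fin n, (i : ℕ) + 1 < n →
    (if (i : ℕ) % 2 = 0 then π (finSucc i) < π i else π i < π (finSucc i))

instance {n : ℕ} (π : Equiv.Perm (Fin n)) : Decidable (DownUp π) := by
  unfold DownUp; infer_instance

/-- the Euler number `E_m`: the number of down-up permutations of length `m` -/
def eulerNum (m : ℕ) : ℕ :=
  (Finset.univ.filter (fun π : Equiv.Perm (Fin m) => DownUp π)).card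


/-!
Since `altdes` is `des` with every other comparison flipped, `(-1) ^ altdes π` is
`(-1) ^ des π` times a sign that depends only on `n`. Pad `π` with a letter smaller than all
others at both ends. Valley hopping at the smallest letter `x` that is neither a peak nor a
valley moves `x` across the maximal run of larger letters on one side of it; this turns a double
ascent into a double descent and back, changes `des` by one, and leaves the peak/valley type of
every other letter unchanged. So it is a sign-reversing involution, and the sum reduces to the
permutations all of whose letters are peaks or valleys. With the padding these are exactly the
down-up permutations of odd length, and for them `altdes π = n - 1` is even.
-/

namespace AltDes

open Equiv Finset

/-- `Fin.cycleIcc a b`, read on integer positions. -/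
def cyc (a b m : ℤ) : ℤ := if m = b then a else if a ≤ m ∧ m < b then m + 1 else m

/-- `u ∘ cyc p e` moves the letter at `p` to `e`, past the run `(p, e]` of larger letters. Every
other letter keeps its comparisons with both neighbors: a neighbor changes only at the two ends
of the run, and then to one on the same side of the letter concerned. -/
lemma cyc_neighbors (u : ℤ → ℤ) {p e m : ℤ} (hpe : p < e) (hleft : u (p - 1) < u p)
    (hblock : ∀ j, p < j → j ≤ e → u p < u j) (hwall : u (e + 1) < u p) (hm : m ≠ e) :
    (u (cyc p e (m - 1)) < u (cyc p e m) ↔ u (cyc p e m - 1) < u (cyc p e m)) ∧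
    (u (cyc p e (m + 1)) < u (cyc p e m) ↔ u (cyc p e m + 1) < u (cyc p e m)) := by
  have := hblock (p + 1) (by omega) (by omega)
  have := hblock e hpe le_rfl
  have := hblock (m - 1)
  have := hblock m
  have := hblock (m + 1)
  obtain rfl | hmp := eq_or_ne m p
  · obtain rfl | hme := eq_or_ne e (m + 1) <;>
      constructor <;> unfold cyc <;> split_ifs <;> ring_nf at * <;> first | omega | simp_all
  obtain rfl | hmp' := eq_or_ne p (m + 1) <;>
    constructor <;> unfold cyc <;> split_ifs <;> subst_vars <;> ring_nf at * <;> omega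

variable {n : ℕ}

lemma val_cycleIcc {a b : Fin n} (hab : a ≤ b) (k : Fin n) :
    ((Fin.cycleIcc a b k : ℕ) : ℤ) = cyc a b k := by
  have : NeZero n := NeZero.of_pos k.pos
  have : (a : ℕ) ≤ b := hab
  unfold cyc
  obtain h | h := lt_or_ge k a
  · have : (k : ℕ) < a := h
    rw [Fin.cycleIcc_of_lt h]
    split_ifs <;> omega
  obtain h' | rfl | h' := lt_trichotomy k b
  · have : (a : ℕ) ≤ k := h
    have : (k : ℕ) < b := h'
    rw [Fin.cycleIcc_of_ge_of_lt h h', Fin.val_add_one_of_lt' (by omega)]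
    split_ifs <;> omega
  · rw [Fin.cycleIcc_of_last hab]
    simp
  · have : (b : ℕ) < k := h'
    rw [Fin.cycleIcc_of_gt h']
    split_ifs <;> omega

/-- The one-line notation of `π`, padded with `-1`, a letter smaller than all others, on both
sides. -/
def word (π : Perm (Fin n)) (j : ℤ) : ℤ :=
  if h : 0 ≤ j ∧ j < n then π ⟨j.toNat, by omega⟩ else -1

def pos (π : Perm (Fin n)) (y : Fin n) : ℤ := (π.symm y : ℕ)

section Word

variable {π : Perm (Fin n)} {x y : Fin n}

lemma word_apply (π : Perm (Fin n)) (i : Fin n) : word π i = π i := by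
  simp [word]

lemma word_of_not_mem (π : Perm (Fin n)) {j : ℤ} (h : ¬ (0 ≤ j ∧ j < n)) :
    word π j = -1 := by
  simp [word, h]

lemma word_nonneg (π : Perm (Fin n)) {j : ℤ} (h₀ : 0 ≤ j) (h₁ : j < n) :
    0 ≤ word π j := by
  simp [word, h₀, h₁]

lemma word_pos (π : Perm (Fin n)) (y : Fin n) : word π (pos π y) = y := by
  simp [pos, word_apply]

lemma pos_nonneg (π : Perm (Fin n)) (y : Fin n) : 0 ≤ pos π y := by simp [pos]

lemma pos_lt (π : Perm (Fin n)) (y : Fin n) : pos π y < n := by simp [pos]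

lemma eq_of_word_eq (π : Perm (Fin n)) {i j : ℤ} (h : word π i = word π j)
    (hi : 0 ≤ word π i) : i = j := by
  unfold word at h hi
  split_ifs at h hi <;> try omega
  have := π.injective (Fin.ext (by exact_mod_cast h))
  simp only [Fin.mk.injEq] at this
  omega

lemma pos_eq_of_word_eq (π : Perm (Fin n)) {j : ℤ} (h : word π j = y) : pos π y = j :=
  eq_of_word_eq π (by rw [word_pos, h]) (by rw [word_pos]; omega)

lemma pos_inj : pos π x = pos π y ↔ x = y := by
  refine ⟨fun h => ?_, fun h => h ▸ rfl⟩
  have := word_pos π x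
  rw [h, word_pos] at this
  exact Fin.ext (by exact_mod_cast this.symm)

lemma word_mul_cycleIcc (π : Perm (Fin n)) {a b : Fin n} (hab : a ≤ b) (j : ℤ) :
    word (π * Fin.cycleIcc a b) j = word π (cyc a b j) := by
  by_cases h : 0 ≤ j ∧ j < n
  · lift j to ℕ using h.1
    have hj : j < n := by exact_mod_cast h.2
    rw [show (j : ℤ) = ((⟨j, hj⟩ : Fin n) : ℕ) from rfl, ← val_cycleIcc hab, word_apply,
      word_apply]
    rfl
  · have : cyc a b j = j := by unfold cyc; split_ifs <;> omega
    rw [this, word_of_not_mem _ h, word_of_not_mem _ h]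

lemma pos_mul_cycleIcc (π : Perm (Fin n)) {a b : Fin n} (hab : a ≤ b) (y : Fin n) :
    cyc a b (pos (π * Fin.cycleIcc a b) y) = pos π y := by
  rw [pos, pos, ← val_cycleIcc hab]
  simp [Perm.mul_def]

end Word

def PrevLt (π : Perm (Fin n)) (y : Fin n) : Prop := word π (pos π y - 1) < y

def NextLt (π : Perm (Fin n)) (y : Fin n) : Prop := word π (pos π y + 1) < y

instance (π : Perm (Fin n)) (y : Fin n) : Decidable (PrevLt π y) := by
  unfold PrevLt; infer_instance

instance (π : Perm (Fin n)) (y : Fin n) : Decidable (NextLt π y) := by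
  unfold NextLt; infer_instance

/-- `(-1) ^ des π`, the last letter counting as a descent onto the padding. -/
def descentSign (π : Perm (Fin n)) : ℤ := ∏ y, if NextLt π y then -1 else 1

/-- The double ascents and double descents of `π`: the letters that are neither peaks nor
valleys. -/
def doubleLetters (π : Perm (Fin n)) : Finset (Fin n) := {y | ¬ (PrevLt π y ↔ NextLt π y)}

section Runs

variable {π : Perm (Fin n)} {x : Fin n}

lemma lt_word_of_not_lt {j : ℤ} (hj : j ≠ pos π x) (h : ¬ word π j < x) :
    (x : ℤ) < word π j :=
  lt_of_le_of_ne (not_lt.mp h) fun h' => hj (pos_eq_of_word_eq π h'.symm).symm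

lemma exists_word_lt_right (π : Perm (Fin n)) (x : Fin n) :
    ∃ d : ℕ, word π (pos π x + d + 1) < x :=
  ⟨n, by rw [word_of_not_mem π (by have := pos_nonneg π x; omega)]; omega⟩

/-- The last position of the run of letters larger than `x` that starts right after `x`. -/
def blockEnd (π : Perm (Fin n)) (x : Fin n) : Fin n :=
  ⟨(π.symm x : ℕ) + Nat.find (exists_word_lt_right π x), by
    have := pos_lt π x
    have : Nat.find (exists_word_lt_right π x) ≤ n - 1 - (π.symm x : ℕ) :=
      Nat.find_le (by rw [word_of_not_mem π (by simp [pos]; omega)]; omega)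
    omega⟩

lemma blockEnd_val (π : Perm (Fin n)) (x : Fin n) :
    ((blockEnd π x : ℕ) : ℤ) = pos π x + Nat.find (exists_word_lt_right π x) := by
  simp [blockEnd, pos]

lemma word_blockEnd_add_one_lt : word π (blockEnd π x + 1) < x := by
  rw [blockEnd_val]
  exact Nat.find_spec (exists_word_lt_right π x)

lemma lt_word_of_le_blockEnd {j : ℤ} (h₁ : pos π x < j) (h₂ : j ≤ blockEnd π x) :
    (x : ℤ) < word π j := by
  rw [blockEnd_val] at h₂
  refine lt_word_of_not_lt (by omega) fun h => ?_
  refine Nat.find_min (exists_word_lt_right π x) (m := (j - pos π x - 1).toNat) (by omega) ?_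
  rwa [show pos π x + ((j - pos π x - 1).toNat : ℕ) + 1 = j by omega]

lemma blockEnd_eq {e : Fin n} (he : pos π x ≤ e)
    (hblock : ∀ j : ℤ, pos π x < j → j ≤ e → (x : ℤ) < word π j)
    (hwall : word π (e + 1) < x) : blockEnd π x = e := by
  rcases lt_trichotomy (blockEnd π x) e with h | h | h
  · have : ((blockEnd π x : ℕ) : ℤ) < e := by exact_mod_cast h
    have := hblock (blockEnd π x + 1) (by rw [blockEnd_val]; omega) (by omega)
    have := word_blockEnd_add_one_lt (π := π) (x := x)
    omega
  · exact h
  · have : ((e : ℕ) : ℤ) < blockEnd π x := by exact_mod_cast h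
    have := lt_word_of_le_blockEnd (π := π) (x := x) (j := e + 1) (by omega) (by omega)
    omega

lemma exists_word_lt_left (π : Perm (Fin n)) (x : Fin n) :
    ∃ d : ℕ, word π (pos π x - d - 1) < x :=
  ⟨π.symm x, by rw [word_of_not_mem π (by simp [pos])]; omega⟩

lemma find_word_lt_left_le (π : Perm (Fin n)) (x : Fin n) :
    Nat.find (exists_word_lt_left π x) ≤ π.symm x :=
  Nat.find_le (by rw [word_of_not_mem π (by simp [pos])]; omega)

/-- The first position of the run of letters larger than `x` that ends right before `x`. -/
def blockStart (π : Perm (Fin n)) (x : Fin n) : Fin n :=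
  ⟨(π.symm x : ℕ) - Nat.find (exists_word_lt_left π x), by omega⟩

lemma blockStart_val (π : Perm (Fin n)) (x : Fin n) :
    ((blockStart π x : ℕ) : ℤ) = pos π x - Nat.find (exists_word_lt_left π x) := by
  rw [blockStart, Nat.cast_sub (find_word_lt_left_le π x)]
  rfl

lemma word_blockStart_sub_one_lt : word π (blockStart π x - 1) < x := by
  rw [blockStart_val]
  exact Nat.find_spec (exists_word_lt_left π x)

lemma lt_word_of_blockStart_le {j : ℤ} (h₁ : blockStart π x ≤ j) (h₂ : j < pos π x) :
    (x : ℤ) < word π j := by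
  rw [blockStart_val] at h₁
  refine lt_word_of_not_lt (by omega) fun h => ?_
  refine Nat.find_min (exists_word_lt_left π x) (m := (pos π x - j - 1).toNat) (by omega) ?_
  rwa [show pos π x - ((pos π x - j - 1).toNat : ℕ) - 1 = j by omega]

lemma blockStart_eq {s : Fin n} (hs : s ≤ pos π x)
    (hblock : ∀ j : ℤ, s ≤ j → j < pos π x → (x : ℤ) < word π j)
    (hwall : word π ((s : ℤ) - 1) < x) : blockStart π x = s := by
  rcases lt_trichotomy (blockStart π x) s with h | h | h
  · have : ((blockStart π x : ℕ) : ℤ) < s := by exact_mod_cast h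
    have := lt_word_of_blockStart_le (π := π) (x := x) (j := s - 1) (by omega) (by omega)
    omega
  · exact h
  · have : ((s : ℕ) : ℤ) < blockStart π x := by exact_mod_cast h
    have := hblock ((blockStart π x : ℤ) - 1) (by omega) (by rw [blockStart_val]; omega)
    have := word_blockStart_sub_one_lt (π := π) (x := x)
    omega

end Runs

def hopRight (π : Perm (Fin n)) (x : Fin n) : Perm (Fin n) :=
  π * Fin.cycleIcc (π.symm x) (blockEnd π x)

def hopLeft (π : Perm (Fin n)) (x : Fin n) : Perm (Fin n) :=
  π * (Fin.cycleIcc (blockStart π x) (π.symm x))⁻¹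

/-- `φ` arises from `π` by moving its double ascent `x` to the right, past the nonempty run
`(pos x, e]` of larger letters, so that `x` becomes a double descent. -/
def IsHop (π φ : Perm (Fin n)) (x : Fin n) : Prop :=
  ∃ e : Fin n, π.symm x < e ∧ PrevLt π x ∧
    (∀ j : ℤ, pos π x < j → j ≤ e → (x : ℤ) < word π j) ∧
    word π (e + 1) < x ∧ φ = π * Fin.cycleIcc (π.symm x) e

section Hop

variable {π φ : Perm (Fin n)} {x y : Fin n}

namespace IsHop

lemma prevLt_iff_and_nextLt_iff (h : IsHop π φ x) (hy : y ≠ x) :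
    (PrevLt φ y ↔ PrevLt π y) ∧ (NextLt φ y ↔ NextLt π y) := by
  obtain ⟨e, hpe, hprev, hblock, hwall, rfl⟩ := h
  have hpe' : pos π x < e := by simp only [pos]; exact_mod_cast hpe
  have hword := word_mul_cycleIcc π hpe.le
  have hpos := pos_mul_cycleIcc π hpe.le y
  have hne : pos (π * Fin.cycleIcc (π.symm x) e) y ≠ e := fun h' => by
    rw [h', show cyc _ _ _ = pos π x by simp [cyc, pos], pos_inj] at hpos
    exact hy hpos.symm
  have hx : word π ((π.symm x : ℕ) : ℤ) = x := word_pos π x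
  obtain ⟨hl, hr⟩ := cyc_neighbors (word π) (p := ((π.symm x : ℕ) : ℤ)) hpe'
    (by rwa [hx]) (by rwa [hx]) (by rwa [hx]) hne
  rw [hpos, word_pos] at hl hr
  unfold PrevLt NextLt
  rw [hword, hword]
  exact ⟨hl, hr⟩

lemma prevLt_nextLt_self (h : IsHop π φ x) :
    PrevLt π x ∧ ¬ NextLt π x ∧ ¬ PrevLt φ x ∧ NextLt φ x := by
  obtain ⟨e, hpe, hprev, hblock, hwall, rfl⟩ := h
  have hp : pos π x = (π.symm x : ℕ) := rfl
  have hpe' : pos π x < e := by rw [hp]; exact_mod_cast hpe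
  have hword := word_mul_cycleIcc π hpe.le
  have hposx : pos (π * Fin.cycleIcc (π.symm x) e) x = e := by
    have h := pos_mul_cycleIcc π hpe.le x
    unfold cyc at h
    split_ifs at h <;> omega
  refine ⟨hprev, ?_, ?_, ?_⟩
  · have := hblock (pos π x + 1) (by omega) (by omega)
    unfold NextLt
    omega
  · have := hblock e hpe' le_rfl
    unfold PrevLt
    rw [hposx, hword, show cyc _ _ ((e : ℤ) - 1) = e by unfold cyc; split_ifs <;> omega]
    omega
  · unfold NextLt
    rwa [hposx, hword, show cyc _ _ ((e : ℤ) + 1) = e + 1 by unfold cyc; split_ifs <;> omega]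

lemma descentSign_eq (h : IsHop π φ x) : descentSign φ = -descentSign π := by
  unfold descentSign
  rw [← mul_prod_erase _ _ (mem_univ x), ← mul_prod_erase _ _ (mem_univ x),
    prod_congr rfl fun y hy =>
      if_congr (h.prevLt_iff_and_nextLt_iff (ne_of_mem_erase hy)).2 rfl rfl]
  obtain ⟨-, hπ, -, hφ⟩ := h.prevLt_nextLt_self
  simp [hπ, hφ]

lemma doubleLetters_eq (h : IsHop π φ x) : doubleLetters φ = doubleLetters π := by
  ext y
  simp only [doubleLetters, mem_filter, mem_univ, true_and]
  rcases eq_or_ne y x with rfl | hy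
  · have := h.prevLt_nextLt_self
    tauto
  · rw [(h.prevLt_iff_and_nextLt_iff hy).1, (h.prevLt_iff_and_nextLt_iff hy).2]

lemma hopRight_eq (h : IsHop π φ x) : hopRight π x = φ := by
  obtain ⟨e, hpe, -, hblock, hwall, rfl⟩ := h
  rw [hopRight, blockEnd_eq (by simp only [pos]; exact_mod_cast hpe.le) hblock hwall]

lemma hopLeft_eq (h : IsHop π φ x) : hopLeft φ x = π := by
  obtain ⟨e, hpe, hprev, hblock, hwall, rfl⟩ := h
  have : NeZero n := NeZero.of_pos x.pos
  have hp : pos π x = (π.symm x : ℕ) := rfl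
  have hword := word_mul_cycleIcc π hpe.le
  have hposx : (π * Fin.cycleIcc (π.symm x) e).symm x = e := by
    rw [Perm.mul_def, Equiv.symm_trans_apply, Equiv.symm_apply_eq, Fin.cycleIcc_of_last hpe.le]
  have hstart : blockStart (π * Fin.cycleIcc (π.symm x) e) x = π.symm x := by
    have he : pos (π * Fin.cycleIcc (π.symm x) e) x = e := by rw [pos, hposx]
    refine blockStart_eq (by rw [he]; exact_mod_cast hpe.le) (fun j h₁ h₂ => ?_) ?_
    · rw [hword, show cyc _ _ j = j + 1 by unfold cyc; split_ifs <;> omega]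
      exact hblock _ (by omega) (by omega)
    · rw [hword, show cyc _ _ (((π.symm x : ℕ) : ℤ) - 1) = pos π x - 1 by
        unfold cyc; split_ifs <;> omega]
      exact hprev
  rw [hopLeft, hstart, hposx, mul_inv_cancel_right]

end IsHop

lemma isHop_hopRight (h₁ : PrevLt π x) (h₂ : ¬ NextLt π x) : IsHop π (hopRight π x) x := by
  refine ⟨blockEnd π x, ?_, h₁, fun _ => lt_word_of_le_blockEnd, word_blockEnd_add_one_lt,
    rfl⟩
  have := blockEnd_val π x
  have : Nat.find (exists_word_lt_right π x) ≠ 0 := fun h0 => h₂ <| by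
    have := word_blockEnd_add_one_lt (π := π) (x := x)
    rwa [blockEnd_val, h0, Nat.cast_zero, add_zero] at this
  show (π.symm x : ℕ) < blockEnd π x
  simp only [pos] at *
  omega

lemma isHop_hopLeft (h₁ : ¬ PrevLt π x) (h₂ : NextLt π x) : IsHop (hopLeft π x) π x := by
  have : NeZero n := NeZero.of_pos x.pos
  have hp : pos π x = (π.symm x : ℕ) := rfl
  have hs := blockStart_val π x
  have hsp : blockStart π x < π.symm x := by
    have : Nat.find (exists_word_lt_left π x) ≠ 0 := fun h0 => h₁ <| by
      have := word_blockStart_sub_one_lt (π := π) (x := x)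
      rwa [blockStart_val, h0, Nat.cast_zero, sub_zero] at this
    show (blockStart π x : ℕ) < π.symm x
    omega
  have hπ : π = hopLeft π x * Fin.cycleIcc (blockStart π x) (π.symm x) := by simp [hopLeft]
  have hword := word_mul_cycleIcc (hopLeft π x) hsp.le
  rw [← hπ] at hword
  have hposx : (hopLeft π x).symm x = blockStart π x := by
    have : (Fin.cycleIcc (blockStart π x) (π.symm x))⁻¹ (blockStart π x) = π.symm x := by
      rw [Perm.inv_eq_iff_eq, Fin.cycleIcc_of_last hsp.le]
    rw [Equiv.symm_apply_eq, hopLeft, Perm.mul_apply, this, Equiv.apply_symm_apply]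
  have hposx' : pos (hopLeft π x) x = blockStart π x := by rw [pos, hposx]
  refine ⟨π.symm x, hposx ▸ hsp, ?_, fun j h₁ h₂ => ?_, ?_, hposx ▸ hπ⟩
  · have h := hword ((blockStart π x : ℤ) - 1)
    rw [show cyc _ _ ((blockStart π x : ℤ) - 1) = (blockStart π x : ℤ) - 1 by
      unfold cyc; split_ifs <;> omega] at h
    unfold PrevLt
    rw [hposx', ← h]
    exact word_blockStart_sub_one_lt
  · have h := hword (j - 1)
    rw [hposx'] at h₁
    rw [show cyc _ _ (j - 1) = j by unfold cyc; split_ifs <;> omega] at h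
    rw [← h]
    exact lt_word_of_blockStart_le (by omega) (by omega)
  · have h := hword (pos π x + 1)
    rw [show cyc _ _ (pos π x + 1) = pos π x + 1 by unfold cyc; split_ifs <;> omega] at h
    rw [← hp, ← h]
    exact h₂

/-- Valley hopping at `x` (Foata–Strehl): a double descent hops left, a double ascent right. -/
def hopAt (π : Perm (Fin n)) (x : Fin n) : Perm (Fin n) :=
  if NextLt π x then hopLeft π x else hopRight π x

lemma IsHop.hopAt_eq (h : IsHop π φ x) : hopAt π x = φ ∧ hopAt φ x = π := by
  obtain ⟨-, hπ, -, hφ⟩ := h.prevLt_nextLt_self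
  exact ⟨by rw [hopAt, if_neg hπ, h.hopRight_eq], by rw [hopAt, if_pos hφ, h.hopLeft_eq]⟩

lemma hopAt_spec (hx : x ∈ doubleLetters π) :
    doubleLetters (hopAt π x) = doubleLetters π ∧ descentSign (hopAt π x) = -descentSign π ∧
      hopAt (hopAt π x) x = π := by
  simp only [doubleLetters, mem_filter, mem_univ, true_and] at hx
  by_cases hn : NextLt π x
  · have h := isHop_hopLeft (by tauto) hn
    rw [show hopAt π x = hopLeft π x from if_pos hn]
    exact ⟨h.doubleLetters_eq.symm, by rw [h.descentSign_eq, neg_neg], h.hopAt_eq.1⟩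
  · have h := isHop_hopRight (by tauto) hn
    rw [show hopAt π x = hopRight π x from if_neg hn]
    exact ⟨h.doubleLetters_eq, h.descentSign_eq, h.hopAt_eq.2⟩

end Hop

def hopMin (π : Perm (Fin n)) : Perm (Fin n) :=
  if h : (doubleLetters π).Nonempty then hopAt π ((doubleLetters π).min' h) else π

lemma hopMin_spec {π : Perm (Fin n)} (h : (doubleLetters π).Nonempty) :
    (doubleLetters (hopMin π)).Nonempty ∧ descentSign (hopMin π) = -descentSign π ∧
      hopMin (hopMin π) = π := by
  obtain ⟨hd, hs, hinv⟩ := hopAt_spec ((doubleLetters π).min'_mem h)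
  have e : hopMin π = hopAt π ((doubleLetters π).min' h) := dif_pos h
  have h' : (doubleLetters (hopMin π)).Nonempty := by rwa [e, hd]
  refine ⟨h', by rw [e, hs], ?_⟩
  have : (doubleLetters (hopMin π)).min' h' = (doubleLetters π).min' h := by simp only [e, hd]
  rw [hopMin, dif_pos h', this, e, hinv]

section Altdes

variable {π : Perm (Fin n)}

lemma word_add_one {i : Fin n} (h : (i : ℕ) + 1 < n) :
    word π ((i : ℕ) + 1) = π (finSucc i) := by
  have : ((finSucc i : ℕ) : ℤ) = (i : ℕ) + 1 := by simp [finSucc, Nat.mod_eq_of_lt h]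
  rw [← this, word_apply]

lemma apply_finSucc_ne {i : Fin n} (h : (i : ℕ) + 1 < n) : π (finSucc i) ≠ π i :=
  π.injective.ne fun h' => by simpa [finSucc, Nat.mod_eq_of_lt h] using congrArg Fin.val h'

lemma nextLt_apply_iff (i : Fin n) : NextLt π (π i) ↔ word π ((i : ℕ) + 1) < π i := by
  rw [NextLt, show pos π (π i) = i by simp [pos]]

lemma altDesAt_iff (i : Fin n) :
    altDesAt π i ↔ (i : ℕ) + 1 < n ∧ (NextLt π (π i) ↔ (i : ℕ) % 2 = 0) := by
  unfold altDesAt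
  rw [nextLt_apply_iff]
  refine and_congr_right fun h => ?_
  rw [word_add_one h]
  have := Fin.val_ne_of_ne (apply_finSucc_ne (π := π) h)
  simp only [Fin.lt_def]
  split_ifs <;> omega

lemma neg_one_pow_altdes (π : Perm (Fin n)) :
    (-1 : ℤ) ^ altdes π =
      (∏ i : Fin n, if (i : ℕ) + 1 < n ∧ (i : ℕ) % 2 = 0 then 1 else -1) *
        descentSign π := by
  rw [show descentSign π = ∏ i, if NextLt π (π i) then -1 else 1 from
    (Equiv.prod_comp π _).symm]
  rw [altdes, ← prod_const, prod_filter, ← prod_mul_distrib]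
  refine prod_congr rfl fun i _ => ?_
  by_cases h₁ : (i : ℕ) + 1 < n
  · by_cases h₂ : NextLt π (π i) <;> by_cases h₃ : (i : ℕ) % 2 = 0 <;>
      simp [h₁, h₂, h₃, altDesAt_iff]
  · have : NextLt π (π i) := by
      rw [nextLt_apply_iff, word_of_not_mem π (by omega)]
      omega
    simp [h₁, altDesAt_iff, this]

end Altdes

/-- The padded word descends exactly at even positions: `π` is down-up and ends on a descent
onto the padding. -/
def IsZigzag (π : Perm (Fin n)) : Prop :=
  ∀ i : Fin n, word π ((i : ℕ) + 1) < word π i ↔ (i : ℕ) % 2 = 0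

instance : DecidablePred (IsZigzag (n := n)) := fun π => by
  unfold IsZigzag; infer_instance

section Zigzag

variable {π : Perm (Fin n)}

lemma forall_pos_iff {P : ℤ → Prop} : (∀ y, P (pos π y)) ↔ ∀ m : ℕ, m < n → P m :=
  ⟨fun h m hm => by simpa [pos] using h (π ⟨m, hm⟩), fun h y => h _ (π.symm y).isLt⟩

lemma doubleLetters_eq_empty_iff : doubleLetters π = ∅ ↔ IsZigzag π := by
  have hpeak : doubleLetters π = ∅ ↔ ∀ m : ℕ, m < n →
      (word π ((m : ℤ) - 1) < word π m ↔ word π ((m : ℤ) + 1) < word π m) := by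
    rw [doubleLetters, filter_eq_empty_iff]
    simp only [mem_univ, true_implies, not_not, PrevLt, NextLt]
    conv_lhs => enter [y]; rw [← word_pos π y]
    exact forall_pos_iff (P := fun m => word π (m - 1) < word π m ↔ word π (m + 1) < word π m)
  have hne : ∀ m : ℕ, m + 1 < n → word π m ≠ word π ((m : ℤ) + 1) := fun m h₁ h =>
    absurd (eq_of_word_eq π h (word_nonneg π (by omega) (by omega))) (by omega)
  have hlt := fun m : ℕ => word_nonneg π (j := m) (by omega)
  have hout := word_of_not_mem π (j := -1) (by omega)
  rw [hpeak, IsZigzag, Fin.forall_iff]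
  constructor
  · intro h m h₁
    induction m with
    | zero => have := h 0; have := hlt 0; grind
    | succ m ih =>
      have := ih (by omega)
      have := h (m + 1)
      have := hne m
      push_cast at *
      simp only [add_sub_cancel_right] at *
      omega
  · intro h m h₁
    cases m with
    | zero => have := h 0; have := hlt 0; grind
    | succ m =>
      have := h (m + 1) h₁
      have := h m
      have := hne m
      push_cast at *
      simp only [add_sub_cancel_right] at *
      omega

lemma IsZigzag.odd (h : IsZigzag π) (hn : 0 < n) : n % 2 = 1 := by
  have h₁ := h ⟨n - 1, by omega⟩
  have := word_nonneg π (j := (n - 1 : ℕ)) (by omega) (by omega)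
  rw [Fin.val_mk, word_of_not_mem π (j := ((n - 1 : ℕ) : ℤ) + 1) (by omega)] at h₁
  omega

lemma descent_iff {i : Fin n} (h : (i : ℕ) + 1 < n) :
    word π ((i : ℕ) + 1) < word π i ↔ π (finSucc i) < π i := by
  rw [word_add_one h, word_apply, Fin.lt_def]
  norm_cast

lemma isZigzag_iff_downUp (hn : n % 2 = 1) : IsZigzag π ↔ DownUp π := by
  have key : ∀ i : Fin n, (i : ℕ) + 1 < n →
      ((if (i : ℕ) % 2 = 0 then π (finSucc i) < π i else π i < π (finSucc i)) ↔
        (word π ((i : ℕ) + 1) < word π i ↔ ((i : ℕ) : ℤ) % 2 = 0)) := fun i h => by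
    rw [descent_iff h]
    have := apply_finSucc_ne (π := π) h
    split_ifs <;> simp only [Fin.lt_def] at * <;> omega
  refine ⟨fun hz i hi => (key i hi).2 (by exact_mod_cast hz i), fun hd i => ?_⟩
  by_cases hi : (i : ℕ) + 1 < n
  · exact_mod_cast (key i hi).1 (hd i hi)
  · have := word_nonneg π (j := i) (by omega) (by omega)
    rw [word_of_not_mem π (j := (i : ℕ) + 1) (by omega)]
    omega

lemma IsZigzag.neg_one_pow_altdes (h : IsZigzag π) : (-1 : ℤ) ^ altdes π = 1 := by
  have hdes : altdes π = n - 1 := by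
    have : altdes π = #{i : Fin n | (i : ℕ) < n - 1} := by
      rw [altdes]
      refine congrArg card (filter_congr fun i _ => ?_)
      rw [altDesAt_iff, nextLt_apply_iff, ← word_apply, h i]
      omega
    rw [this, Fin.card_filter_val_lt]
    omega
  rcases Nat.eq_zero_or_pos n with rfl | hn
  · simp [hdes]
  · rw [hdes, Even.neg_one_pow ⟨(n - 1) / 2, by have := h.odd hn; omega⟩]

end Zigzag

theorem sum_neg_one_pow_altdes (n : ℕ) :
    ∑ π : Perm (Fin n), (-1 : ℤ) ^ altdes π = #{π : Perm (Fin n) | IsZigzag π} := by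
  rw [← sum_filter_add_sum_filter_not univ fun π => (doubleLetters π).Nonempty]
  have hflip : ∀ π : Perm (Fin n), (doubleLetters π).Nonempty →
      (-1 : ℤ) ^ altdes (hopMin π) = -(-1) ^ altdes π := fun π h => by
    rw [neg_one_pow_altdes, neg_one_pow_altdes π, (hopMin_spec h).2.1, mul_neg]
  have hcancel :
      ∑ π ∈ {π : Perm (Fin n) | (doubleLetters π).Nonempty}, (-1 : ℤ) ^ altdes π = 0 := by
    refine sum_involution (fun π _ => hopMin π) (fun π hπ => ?_) (fun π hπ hne hfix => ?_)
      (fun π hπ => ?_) (fun π hπ => (hopMin_spec (mem_filter.1 hπ).2).2.2)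
    · rw [hflip π (mem_filter.1 hπ).2, add_neg_cancel]
    · have := hflip π (mem_filter.1 hπ).2
      rw [hfix] at this
      omega
    · exact mem_filter.2 ⟨mem_univ _, (hopMin_spec (mem_filter.1 hπ).2).1⟩
  rw [hcancel, zero_add, card_eq_sum_ones, Nat.cast_sum, Nat.cast_one]
  refine sum_congr (filter_congr fun π _ => ?_) fun π hπ => ?_
  · rw [not_nonempty_iff_eq_empty, doubleLetters_eq_empty_iff]
  · exact IsZigzag.neg_one_pow_altdes (mem_filter.1 hπ).2

end AltDes

/-- `Â_{2n+1}(-1) = E_{2n+1}` and `Â_{2n}(-1) = 0` for `n ≥ 1`. -/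
theorem stmt18 (n : ℕ) :
    (∑ π : Equiv.Perm (Fin (2 * n + 1)), (-1 : ℤ) ^ altdes π) = eulerNum (2 * n + 1) ∧
    (1 ≤ n → (∑ π : Equiv.Perm (Fin (2 * n)), (-1 : ℤ) ^ altdes π) = 0) := by
  refine ⟨?_, fun hn => ?_⟩
  · rw [AltDes.sum_neg_one_pow_altdes, eulerNum,
      filter_congr fun π _ => AltDes.isZigzag_iff_downUp (by omega)]
  · rw [AltDes.sum_neg_one_pow_altdes, Nat.cast_eq_zero, card_eq_zero, filter_eq_empty_iff]
    exact fun π _ h => by have := h.odd (by omega); omega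
end
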